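/- arXiv:1802.03324 — 5 statements merged into one kernel-verified Lean document; each statement's English description precedes it below -/
import Mathlib

section
/- Let F = {1/k : k ∈ ℕ, k ≥ 1}. For every n ≥ 1, the lower box dimension of the n-fold iterated sumset nF = F + F + ⋯ + F (n times) is at least 1 - 2^{-n}. -/
open Set Metric Filter Pointwise

/-- Smallest number of balls of radius `r` needed to cover `E`. -/
noncomputable def coverNum {X : Type*} [PseudoMetricSpace X] (E : Set X) (r : ℝ) : ℕ :=
  sInf {n : ℕ | ∃ S : Finset X, S.card = n ∧ E ⊆ ⋃ x ∈ S, Metric.ball x r}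

/-- Upper box dimension of a bounded set. -/
noncomputable def upperBoxDimBdd {X : Type*} [PseudoMetricSpace X] (E : Set X) : ℝ :=
  Filter.limsup (fun r : ℝ => Real.log (coverNum E r : ℝ) / (-Real.log r))
    (nhdsWithin 0 (Set.Ioi 0))

/-- Lower box dimension of a bounded set. -/
noncomputable def lowerBoxDimBdd {X : Type*} [PseudoMetricSpace X] (E : Set X) : ℝ :=
  Filter.liminf (fun r : ℝ => Real.log (coverNum E r : ℝ) / (-Real.log r))
    (nhdsWithin 0 (Set.Ioi 0))

/-- Upper box dimension, extended to unbounded sets via suprema over bounded subsets. -/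
noncomputable def upperBoxDim {X : Type*} [PseudoMetricSpace X] (E : Set X) : ℝ :=
  ⨆ K : {K : Set X // K ⊆ E ∧ Bornology.IsBounded K}, upperBoxDimBdd K.1

/-- Lower box dimension, extended to unbounded sets via suprema over bounded subsets. -/
noncomputable def lowerBoxDim {X : Type*} [PseudoMetricSpace X] (E : Set X) : ℝ :=
  ⨆ K : {K : Set X // K ⊆ E ∧ Bornology.IsBounded K}, lowerBoxDimBdd K.1

/-- Assouad dimension. -/
noncomputable def assouadDim {X : Type*} [PseudoMetricSpace X] (F : Set X) : ℝ :=
  sInf {s : ℝ | 0 ≤ s ∧ ∃ C > 0, ∀ x ∈ F, ∀ R > 0, ∀ r, 0 < r → r < R →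
    (coverNum (Metric.ball x R ∩ F) r : ℝ) ≤ C * (R / r) ^ s}

/-- Lower dimension. -/
noncomputable def lowerDim {X : Type*} [PseudoMetricSpace X] (F : Set X) : ℝ :=
  sSup {s : ℝ | 0 ≤ s ∧ ∃ C > 0, ∀ x ∈ F, ∀ R, 0 < R → R < Metric.diam F →
    ∀ r, 0 < r → r < R →
      C * (R / r) ^ s ≤ (coverNum (Metric.ball x R ∩ F) r : ℝ)}

/-- `n`-fold iterated sumset: `iterSumset F n = F + F + ⋯ + F` (`n` times), with
`iterSumset F 0 = {0}`. -/
def iterSumset {M : Type*} [AddMonoid M] (F : Set M) : ℕ → Set M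
  | 0 => {0}
  | n + 1 => iterSumset F n + F

/-- Distance set of a set in a metric space. -/
def distSet {X : Type*} [PseudoMetricSpace X] (F : Set X) : Set ℝ :=
  {r : ℝ | ∃ x ∈ F, ∃ y ∈ F, dist x y = r}

/-!
Group denominators into blocks `[s i, 2 * s i)` with `s 0 = m` and `s (i + 1) = 8 n (s i) ^ 2`.
Choosing one denominator in each of the `n` blocks gives `∏ s i ≥ m ^ (2 ^ n - 1)` points of `nF`.
Two of them differ by at least `(8 n m) ^ (-2 ^ n)`: the first block where the choices differ
contributes a gap `1 / (4 s i ^ 2)` that the much finer later blocks cannot cancel. Taking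
`m ≈ r ^ (-2 ^ (-n))` makes these points `2 r`-separated, so `N(nF, r) ≳ r ^ (-(1 - 2 ^ (-n)))`.
-/

open Real Topology Bornology

theorem card_le_coverNum {X : Type*} [PseudoMetricSpace X] {E : Set X} {r : ℝ}
    (hE : TotallyBounded E) (hr : 0 < r) {T : Finset X} (hTE : ↑T ⊆ E)
    (hT : (T : Set X).Pairwise fun x y => 2 * r ≤ dist x y) : T.card ≤ coverNum E r := by
  classical
  obtain ⟨t, ht, hEt⟩ := Metric.totallyBounded_iff.1 hE r hr
  refine le_csInf ⟨ht.toFinset.card, _, rfl, by simpa using hEt⟩ ?_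
  rintro _ ⟨S, rfl, hES⟩
  have hcenter : ∀ x ∈ T, ∃ c ∈ S, x ∈ ball c r := fun x hx => by simpa using hES (hTE hx)
  choose! c hcS hxc using hcenter
  refine Finset.card_le_card_of_injOn c hcS fun x hx y hy hxy => by_contra fun hne => ?_
  have hxc' := mem_ball.1 (hxc x hx)
  have hyc' := mem_ball.1 (hxc y hy)
  rw [hxy] at hxc'
  linarith [hT hx hy hne, dist_triangle_right x y (c y)]

theorem coverNum_le_of_subset_Icc {E : Set ℝ} {a b r : ℝ} (hE : E ⊆ Icc a b) (hr : 0 < r) :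
    coverNum E r ≤ ⌈(b - a) / r⌉₊ + 1 := by
  set N := ⌈(b - a) / r⌉₊
  obtain ⟨S, hS, hES⟩ : ∃ S : Finset ℝ, S.card ≤ N + 1 ∧ E ⊆ ⋃ x ∈ S, ball x r := by
    refine ⟨(Finset.range (N + 1)).image fun i : ℕ => a + i * r,
      Finset.card_image_le.trans (by simp), fun y hy => ?_⟩
    obtain ⟨hay, hyb⟩ := hE hy
    set i := ⌊(y - a) / r⌋₊
    have hiN : i ≤ N := (Nat.floor_le_floor (by gcongr)).trans (Nat.floor_le_ceil _)
    have hi : i * r ≤ y - a :=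
      (le_div_iff₀ hr).1 (Nat.floor_le (div_nonneg (sub_nonneg.2 hay) hr.le))
    have hi' : y - a < (i + 1) * r := (div_lt_iff₀ hr).1 (Nat.lt_floor_add_one _)
    simp only [mem_iUnion, Finset.mem_image, Finset.mem_range, exists_prop]
    refine ⟨_, ⟨i, by omega, rfl⟩, ?_⟩
    rw [mem_ball, Real.dist_eq, abs_lt]
    constructor <;> nlinarith
  exact (Nat.sInf_le ⟨S, rfl, hES⟩ : coverNum E r ≤ S.card).trans hS

theorem tendsto_add_div_neg_log (a C : ℝ) :
    Tendsto (fun r => a + C / -log r) (𝓝[>] 0) (𝓝 a) := by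
  have h := tendsto_neg_atTop_iff.2 tendsto_log_nhdsGT_zero
  simpa using tendsto_const_nhds.add (tendsto_const_nhds.div_atTop h)

theorem eventually_logCoverNum_div_nonneg {X : Type*} [PseudoMetricSpace X] (E : Set X) :
    ∀ᶠ r in 𝓝[>] 0, 0 ≤ log (coverNum E r) / -log r := by
  filter_upwards [Ioo_mem_nhdsGT one_pos] with r hr
  exact div_nonneg (log_natCast_nonneg _) (neg_nonneg.2 (log_nonpos hr.1.le hr.2.le))

theorem eventually_logCoverNum_div_le {E : Set ℝ} (hE : IsBounded E) :
    ∃ C, ∀ᶠ r in 𝓝[>] 0, log (coverNum E r) / -log r ≤ 1 + C / -log r := by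
  obtain ⟨R, hR, hER⟩ := hE.subset_closedBall_lt 0 0
  rw [Real.closedBall_eq_Icc, zero_sub, zero_add] at hER
  refine ⟨log (2 * R + 2), ?_⟩
  filter_upwards [Ioo_mem_nhdsGT one_pos] with r ⟨hr0, hr1⟩
  have hlr : 0 < -log r := neg_pos.2 (log_neg hr0 hr1)
  have hcover : (coverNum E r : ℝ) ≤ (2 * R + 2) / r := by
    have hN := coverNum_le_of_subset_Icc hER hr0
    rw [sub_neg_eq_add, ← two_mul] at hN
    have hceil := Nat.ceil_lt_add_one (div_nonneg (by linarith : 0 ≤ 2 * R) hr0.le)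
    have h2 : 2 ≤ 2 / r := by rw [le_div_iff₀ hr0]; linarith
    rw [add_div]
    linarith [(Nat.cast_le (α := ℝ)).2 hN, Nat.cast_add_one (R := ℝ) ⌈2 * R / r⌉₊]
  have hlog : log (coverNum E r) ≤ log (2 * R + 2) - log r := by
    rw [← log_div (by positivity) hr0.ne']
    rcases (coverNum E r).eq_zero_or_pos with h | h
    · rw [h, Nat.cast_zero, log_zero]
      exact log_nonneg (by rw [le_div_iff₀ hr0]; linarith)
    · exact log_le_log (by exact_mod_cast h) hcover
  rw [div_le_iff₀ hlr, add_mul, div_mul_cancel₀ _ hlr.ne']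
  linarith

theorem isBoundedUnder_le_logCoverNum_div {E : Set ℝ} (hE : IsBounded E) :
    IsBoundedUnder (· ≤ ·) (𝓝[>] 0) fun r => log (coverNum E r) / -log r := by
  obtain ⟨C, hC⟩ := eventually_logCoverNum_div_le hE
  exact (tendsto_add_div_neg_log 1 C).isBoundedUnder_le.mono_le hC

theorem lowerBoxDimBdd_le_one {E : Set ℝ} (hE : IsBounded E) : lowerBoxDimBdd E ≤ 1 := by
  obtain ⟨C, hC⟩ := eventually_logCoverNum_div_le hE
  rw [lowerBoxDimBdd, ← (tendsto_add_div_neg_log 1 C).liminf_eq]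
  exact liminf_le_liminf hC
    (isBoundedUnder_of_eventually_ge (eventually_logCoverNum_div_nonneg E))
    (tendsto_add_div_neg_log 1 C).isBoundedUnder_le.isCoboundedUnder_ge

theorem lowerBoxDimBdd_le_lowerBoxDim {E : Set ℝ} (hE : IsBounded E) :
    lowerBoxDimBdd E ≤ lowerBoxDim E := by
  refine le_ciSup (f := fun K : {K : Set ℝ // K ⊆ E ∧ IsBounded K} => lowerBoxDimBdd K.1)
    ⟨1, ?_⟩ ⟨E, subset_rfl, hE⟩
  rintro _ ⟨K, rfl⟩
  exact lowerBoxDimBdd_le_one K.2.2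

theorem le_lowerBoxDimBdd_of_eventually_le_coverNum {E : Set ℝ} (hE : IsBounded E) {c s : ℝ}
    (hc : 0 < c) (h : ∀ᶠ r in 𝓝[>] 0, c * r ^ (-s) ≤ coverNum E r) :
    s ≤ lowerBoxDimBdd E := by
  have hlow : ∀ᶠ r in 𝓝[>] 0, s + log c / -log r ≤ log (coverNum E r) / -log r := by
    filter_upwards [h, Ioo_mem_nhdsGT one_pos] with r hr ⟨hr0, hr1⟩
    have hlr : 0 < -log r := neg_pos.2 (log_neg hr0 hr1)
    have hlog : s * -log r + log c ≤ log (coverNum E r) := by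
      calc s * -log r + log c = log (c * r ^ (-s)) := by
            rw [log_mul hc.ne' (rpow_pos_of_pos hr0 _).ne', log_rpow hr0]; ring
        _ ≤ log (coverNum E r) := log_le_log (by positivity) hr
    rw [le_div_iff₀ hlr, add_mul, div_mul_cancel₀ _ hlr.ne']
    exact hlog
  rw [lowerBoxDimBdd, ← (tendsto_add_div_neg_log s (log c)).liminf_eq]
  exact liminf_le_liminf hlow (tendsto_add_div_neg_log s (log c)).isBoundedUnder_ge
    (isBoundedUnder_le_logCoverNum_div hE).isCoboundedUnder_ge

theorem sum_mem_iterSumset {M : Type*} [AddCommMonoid M] {F : Set M} {n : ℕ} {x : Fin n → M}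
    (hx : ∀ i, x i ∈ F) : ∑ i, x i ∈ iterSumset F n := by
  induction n with
  | zero => simp [iterSumset]
  | succ n ih =>
    rw [Fin.sum_univ_castSucc]
    exact add_mem_add (ih fun i => hx _) (hx _)

theorem isBounded_iterSumset {M : Type*} [SeminormedAddCommGroup M] {F : Set M}
    (hF : IsBounded F) : ∀ n, IsBounded (iterSumset F n)
  | 0 => isBounded_singleton
  | n + 1 => isBounded_add (isBounded_iterSumset hF n) hF

theorem exists_le_abs_sum_sub_sum {n : ℕ} {x y δ ε : Fin n → ℝ} (hxy : x ≠ y)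
    (hδ : ∀ i, x i ≠ y i → δ i ≤ |x i - y i|) (hε : ∀ i, |x i - y i| ≤ ε i)
    (htail : ∀ i, ∑ j ∈ Finset.Ioi i, ε j ≤ δ i / 2) :
    ∃ i, δ i / 2 ≤ |∑ j, x j - ∑ j, y j| := by
  classical
  have hne : (Finset.univ.filter fun j => x j ≠ y j).Nonempty := by
    obtain ⟨j, hj⟩ := Function.ne_iff.1 hxy
    exact ⟨j, by simpa using hj⟩
  set i := (Finset.univ.filter fun j => x j ≠ y j).min' hne
  have hi : x i ≠ y i := (Finset.mem_filter.1 (Finset.min'_mem _ hne)).2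
  have hbefore : ∀ j < i, x j = y j := fun j hj =>
    by_contra fun h => (not_le.2 hj) (Finset.min'_le _ _ (by simpa using h))
  have hsplit : ∑ j, x j - ∑ j, y j = (x i - y i) + ∑ j ∈ Finset.Ioi i, (x j - y j) := by
    rw [← Finset.sum_sub_distrib, ← Finset.sum_subset (Finset.subset_univ (Finset.Ici i)),
      Finset.Ici_eq_cons_Ioi, Finset.sum_cons]
    intro j _ hj
    rw [hbefore j (by simpa using hj), sub_self]
  have htail' : |∑ j ∈ Finset.Ioi i, (x j - y j)| ≤ δ i / 2 :=
    (Finset.abs_sum_le_sum_abs _ _).trans ((Finset.sum_le_sum fun j _ => hε j).trans (htail i))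
  have hreverse := abs_sub_abs_le_abs_sub (x i - y i) (-∑ j ∈ Finset.Ioi i, (x j - y j))
  rw [abs_neg, sub_neg_eq_add] at hreverse
  exact ⟨i, by rw [hsplit]; linarith [hδ i hi]⟩

theorem abs_inv_add_sub_inv_add_le {s a b : ℕ} (ha : a < s) (hb : b < s) :
    |((s : ℝ) + a)⁻¹ - ((s : ℝ) + b)⁻¹| ≤ (2 * (s : ℝ))⁻¹ := by
  have hs : (0 : ℝ) < s := by exact_mod_cast (Nat.zero_le a).trans_lt ha
  have hbounds : ∀ c : ℕ, c < s →
      (2 * (s : ℝ))⁻¹ ≤ ((s : ℝ) + c)⁻¹ ∧ ((s : ℝ) + c)⁻¹ ≤ (s : ℝ)⁻¹ := fun c hc => by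
    have hc' : (c : ℝ) < s := by exact_mod_cast hc
    exact ⟨inv_anti₀ (by positivity) (by linarith), inv_anti₀ hs (by simp)⟩
  have hhalf : (s : ℝ)⁻¹ = 2 * (2 * (s : ℝ))⁻¹ := by field_simp
  obtain ⟨ha₁, ha₂⟩ := hbounds a ha
  obtain ⟨hb₁, hb₂⟩ := hbounds b hb
  rw [abs_le]
  constructor <;> linarith

theorem inv_le_abs_inv_add_sub_inv_add {s a b : ℕ} (ha : a < s) (hb : b < s) (hab : a ≠ b) :
    (4 * (s : ℝ) ^ 2)⁻¹ ≤ |((s : ℝ) + a)⁻¹ - ((s : ℝ) + b)⁻¹| := by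
  have ha' : (a : ℝ) < s := by exact_mod_cast ha
  have hb' : (b : ℝ) < s := by exact_mod_cast hb
  have hs : (0 : ℝ) < s := by linarith [(Nat.cast_nonneg a : (0 : ℝ) ≤ a)]
  have hA : (0 : ℝ) < s + a := by positivity
  have hB : (0 : ℝ) < s + b := by positivity
  have hgap : 1 ≤ |(s + b : ℝ) - (s + a)| := by
    rw [add_sub_add_left_eq_sub]
    rcases hab.lt_or_gt with h | h
    · have : (a : ℝ) + 1 ≤ b := by exact_mod_cast h
      rw [abs_of_pos (by linarith)]; linarith
    · have : (b : ℝ) + 1 ≤ a := by exact_mod_cast h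
      rw [abs_of_neg (by linarith)]; linarith
  have hprod : (s + a : ℝ) * (s + b) ≤ 4 * s ^ 2 := by nlinarith
  rw [inv_sub_inv hA.ne' hB.ne', abs_div, abs_of_pos (mul_pos hA hB), le_div_iff₀ (mul_pos hA hB),
    inv_mul_le_iff₀ (by positivity)]
  nlinarith

/-- The factor `8 * n` makes the total spread of all finer blocks at most `1 / (16 s ^ 2)`,
a quarter of the gap `1 / (4 s ^ 2)` between reciprocals of the block `[s, 2 s)`. -/
def blockStart (n m : ℕ) : ℕ → ℕ
  | 0 => m
  | i + 1 => 8 * n * blockStart n m i ^ 2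

section blockStart

variable {n m : ℕ}

theorem pow_two_pow_le_blockStart (hn : 1 ≤ n) (i : ℕ) : m ^ 2 ^ i ≤ blockStart n m i := by
  induction i with
  | zero => simp [blockStart]
  | succ i ih =>
    calc m ^ 2 ^ (i + 1) = (m ^ 2 ^ i) ^ 2 := by rw [pow_succ, pow_mul]
      _ ≤ blockStart n m i ^ 2 := by gcongr
      _ ≤ 8 * n * blockStart n m i ^ 2 := Nat.le_mul_of_pos_left _ (by omega)

theorem one_le_blockStart (hn : 1 ≤ n) (hm : 1 ≤ m) (i : ℕ) : 1 ≤ blockStart n m i :=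
  (Nat.one_le_pow _ _ hm).trans (pow_two_pow_le_blockStart hn i)

theorem blockStart_mono (hn : 1 ≤ n) (hm : 1 ≤ m) : Monotone (blockStart n m) :=
  monotone_nat_of_le_succ fun i => by
    have := one_le_blockStart hn hm i
    change blockStart n m i ≤ 8 * n * blockStart n m i ^ 2
    nlinarith

theorem mul_blockStart_le (i : ℕ) : 8 * n * blockStart n m i ≤ (8 * n * m) ^ 2 ^ i := by
  induction i with
  | zero => simp [blockStart]
  | succ i ih =>
    calc 8 * n * blockStart n m (i + 1) = (8 * n * blockStart n m i) ^ 2 := by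
          simp only [blockStart]; ring
      _ ≤ ((8 * n * m) ^ 2 ^ i) ^ 2 := by gcongr
      _ = (8 * n * m) ^ 2 ^ (i + 1) := by rw [pow_succ 2 i, pow_mul]

theorem eight_mul_blockStart_sq_le (hn : 1 ≤ n) (hm : 1 ≤ m) {i : ℕ} (hi : i < n) :
    8 * blockStart n m i ^ 2 ≤ (8 * n * m) ^ 2 ^ n :=
  calc 8 * blockStart n m i ^ 2 ≤ (8 * n * blockStart n m i) ^ 2 := by
        rw [mul_pow]; gcongr; nlinarith
    _ ≤ ((8 * n * m) ^ 2 ^ i) ^ 2 := by gcongr; exact mul_blockStart_le i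
    _ = (8 * n * m) ^ 2 ^ (i + 1) := by rw [pow_succ 2 i, pow_mul]
    _ ≤ (8 * n * m) ^ 2 ^ n :=
        Nat.pow_le_pow_right (by positivity) (Nat.pow_le_pow_right two_pos hi)

theorem sum_Ioi_inv_blockStart_le (hn : 1 ≤ n) (hm : 1 ≤ m) (i : Fin n) :
    ∑ j ∈ Finset.Ioi i, (2 * (blockStart n m j : ℝ))⁻¹ ≤
      (4 * (blockStart n m i : ℝ) ^ 2)⁻¹ / 2 := by
  have hs : (1 : ℝ) ≤ blockStart n m i := by exact_mod_cast one_le_blockStart hn hm i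
  have hn' : (1 : ℝ) ≤ n := by exact_mod_cast hn
  have hterm : ∀ j ∈ Finset.Ioi i,
      (2 * (blockStart n m j : ℝ))⁻¹ ≤ (16 * n * (blockStart n m i : ℝ) ^ 2)⁻¹ := by
    intro j hj
    have hle : blockStart n m (i + 1) ≤ blockStart n m j :=
      blockStart_mono hn hm (Fin.lt_def.1 (Finset.mem_Ioi.1 hj))
    have hnext : (blockStart n m (i + 1) : ℝ) = 8 * n * (blockStart n m i : ℝ) ^ 2 := by
      simp [blockStart]
    have hle' : (8 * n * (blockStart n m i : ℝ) ^ 2) ≤ blockStart n m j := by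
      rw [← hnext]; exact_mod_cast hle
    exact inv_anti₀ (by positivity) (by linarith)
  calc ∑ j ∈ Finset.Ioi i, (2 * (blockStart n m j : ℝ))⁻¹
      ≤ (Finset.Ioi i).card * (16 * n * (blockStart n m i : ℝ) ^ 2)⁻¹ := by
        simpa using Finset.sum_le_sum hterm
    _ ≤ n * (16 * n * (blockStart n m i : ℝ) ^ 2)⁻¹ := by
        gcongr
        exact_mod_cast (Finset.card_le_univ _).trans (Fintype.card_fin n).le
    _ ≤ (4 * (blockStart n m i : ℝ) ^ 2)⁻¹ / 2 := by
        field_simp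
        nlinarith

end blockStart

noncomputable def blockSum (n m : ℕ) (a : Fin n → ℕ) : ℝ :=
  ∑ i : Fin n, ((blockStart n m i : ℝ) + a i)⁻¹

theorem inv_le_abs_blockSum_sub {n m : ℕ} (hn : 1 ≤ n) (hm : 1 ≤ m) {a b : Fin n → ℕ}
    (ha : ∀ i, a i < blockStart n m i) (hb : ∀ i, b i < blockStart n m i) (hab : a ≠ b) :
    (((8 * n * m) ^ 2 ^ n : ℕ) : ℝ)⁻¹ ≤ |blockSum n m a - blockSum n m b| := by
  have hinj : ∀ i : Fin n,
      ((blockStart n m i : ℝ) + a i)⁻¹ = ((blockStart n m i : ℝ) + b i)⁻¹ ↔ a i = b i := by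
    simp
  obtain ⟨i, hi⟩ := exists_le_abs_sum_sub_sum
    (δ := fun i : Fin n => (4 * (blockStart n m i : ℝ) ^ 2)⁻¹)
    (ε := fun i : Fin n => (2 * (blockStart n m i : ℝ))⁻¹)
    (fun h => hab (funext fun i => (hinj i).1 (congrFun h i)))
    (fun i hi => inv_le_abs_inv_add_sub_inv_add (ha i) (hb i) (mt (hinj i).2 hi))
    (fun i => abs_inv_add_sub_inv_add_le (ha i) (hb i)) (sum_Ioi_inv_blockStart_le hn hm)
  have hs : 1 ≤ blockStart n m i := one_le_blockStart hn hm i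
  calc (((8 * n * m) ^ 2 ^ n : ℕ) : ℝ)⁻¹ ≤ ((8 * blockStart n m i ^ 2 : ℕ) : ℝ)⁻¹ :=
        inv_anti₀ (by positivity) (by exact_mod_cast eight_mul_blockStart_sq_le hn hm i.2)
    _ = (4 * (blockStart n m i : ℝ) ^ 2)⁻¹ / 2 := by push_cast; ring
    _ ≤ _ := hi

def reciprocals : Set ℝ := {x | ∃ k : ℕ, 1 ≤ k ∧ x = 1 / k}

theorem reciprocals_subset_Icc : reciprocals ⊆ Icc 0 1 := by
  rintro _ ⟨k, hk, rfl⟩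
  have hk' : (1 : ℝ) ≤ k := by exact_mod_cast hk
  exact ⟨by positivity, (div_le_one (by positivity)).2 hk'⟩

theorem isBounded_reciprocals : IsBounded reciprocals :=
  isBounded_Icc (0 : ℝ) 1 |>.subset reciprocals_subset_Icc

theorem pow_le_coverNum_iterSumset {n m : ℕ} (hn : 1 ≤ n) (hm : 1 ≤ m) {r : ℝ} (hr : 0 < r)
    (hrm : 2 * r * ((8 * n * m) ^ 2 ^ n : ℕ) ≤ 1) :
    m ^ (2 ^ n - 1) ≤ coverNum (iterSumset reciprocals n) r := by
  set D := Fintype.piFinset fun i : Fin n => Finset.range (blockStart n m i)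
  have hD : ∀ a ∈ D, ∀ i, a i < blockStart n m i := by simp [D]
  have hsep : ∀ a ∈ D, ∀ b ∈ D, a ≠ b → 2 * r ≤ |blockSum n m a - blockSum n m b| :=
    fun a ha b hb hab => by
      refine le_trans ?_ (inv_le_abs_blockSum_sub hn hm (hD a ha) (hD b hb) hab)
      have hX : (0 : ℝ) < ((8 * n * m) ^ 2 ^ n : ℕ) := by positivity
      rwa [← one_div, le_div_iff₀ hX]
  have hinj : Set.InjOn (blockSum n m) D := fun a ha b hb h => by
    by_contra hab
    have := hsep a ha b hb hab
    rw [h, sub_self, abs_zero] at this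
    linarith
  have hsub : ↑(D.image (blockSum n m)) ⊆ iterSumset reciprocals n := by
    simp only [Finset.coe_image, image_subset_iff]
    intro a ha
    refine sum_mem_iterSumset fun i => ⟨blockStart n m i + a i, ?_, ?_⟩
    · have := one_le_blockStart hn hm i; omega
    · push_cast; rw [one_div]
  have htb : TotallyBounded (iterSumset reciprocals n) :=
    (isBounded_iterSumset isBounded_reciprocals n).isCompact_closure.totallyBounded.subset
      subset_closure
  calc m ^ (2 ^ n - 1) = ∏ i : Fin n, m ^ 2 ^ (i : ℕ) := by
        rw [Finset.prod_pow_eq_pow_sum, Fin.sum_univ_eq_sum_range (fun i => 2 ^ i),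
          Nat.geomSum_eq le_rfl]
        simp
    _ ≤ ∏ i : Fin n, blockStart n m i :=
        Finset.prod_le_prod' fun i _ => pow_two_pow_le_blockStart hn i
    _ = (D.image (blockSum n m)).card := by
        rw [Finset.card_image_of_injOn hinj, Fintype.card_piFinset]
        simp
    _ ≤ coverNum (iterSumset reciprocals n) r := by
        refine card_le_coverNum htb hr hsub ?_
        rintro _ hx _ hy hxy
        obtain ⟨a, ha, rfl⟩ := Finset.mem_image.1 hx
        obtain ⟨b, hb, rfl⟩ := Finset.mem_image.1 hy
        exact (Real.dist_eq _ _).symm ▸ hsep a ha b hb fun h => hxy (h ▸ rfl)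

theorem eventually_le_coverNum_iterSumset {n : ℕ} (hn : 1 ≤ n) :
    ∀ᶠ r in 𝓝[>] 0, ((32 * n : ℝ) ^ (2 ^ n - 1))⁻¹ * r ^ (-(1 - (2 ^ n : ℝ)⁻¹)) ≤
      coverNum (iterSumset reciprocals n) r := by
  set θ : ℝ := (2 ^ n : ℝ)⁻¹
  have hθ : 0 < θ := by positivity
  have hn' : (1 : ℝ) ≤ n := by exact_mod_cast hn
  filter_upwards [(tendsto_rpow_neg_nhdsGT_zero (neg_lt_zero.2 hθ)).eventually_ge_atTop (32 * n),
    self_mem_nhdsWithin] with r hr32 (hr : 0 < r)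
  have hpow : ∀ k : ℕ, (r ^ (-θ)) ^ k = r ^ (-(θ * k)) := fun k => by
    rw [← rpow_natCast, ← rpow_mul hr.le, neg_mul]
  set y := r ^ (-θ) / (16 * n) with hy_def
  have hy : 2 ≤ y := by rw [le_div_iff₀ (by positivity)]; linarith
  set m := ⌊y⌋₊
  have hm : 1 ≤ m := Nat.le_floor (by push_cast; linarith)
  have hmy : (m : ℝ) ≤ y := Nat.floor_le (by linarith)
  have hym : y / 2 ≤ m := by linarith [Nat.sub_one_lt_floor y]
  have hθn : θ * ((2 ^ n : ℕ) : ℝ) = 1 := by simp [θ]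
  have hrm : 2 * r * ((8 * n * m) ^ 2 ^ n : ℕ) ≤ 1 := by
    have h8 : (8 * n * m : ℝ) ≤ r ^ (-θ) / 2 :=
      calc (8 * n * m : ℝ) ≤ 8 * n * y := by gcongr
        _ = r ^ (-θ) / 2 := by rw [hy_def]; field_simp; ring
    have h2 : (2 : ℝ) ≤ 2 ^ 2 ^ n := le_self_pow₀ one_le_two (by positivity)
    calc 2 * r * ((8 * n * m) ^ 2 ^ n : ℕ) ≤ 2 * r * (r ^ (-θ) / 2) ^ 2 ^ n := by
          push_cast; gcongr
      _ = 2 * r * (r⁻¹ / 2 ^ 2 ^ n) := by rw [div_pow, hpow, hθn, rpow_neg_one]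
      _ ≤ 2 * r * (r⁻¹ / 2) := by gcongr
      _ = 1 := by field_simp
  have hk : θ * ((2 ^ n - 1 : ℕ) : ℝ) = 1 - θ := by
    rw [Nat.cast_sub Nat.one_le_two_pow, mul_sub, hθn, Nat.cast_one, mul_one]
  calc ((32 * n : ℝ) ^ (2 ^ n - 1))⁻¹ * r ^ (-(1 - θ))
      = (r ^ (-θ)) ^ (2 ^ n - 1) / (32 * n) ^ (2 ^ n - 1) := by rw [hpow, hk]; ring
    _ = (y / 2) ^ (2 ^ n - 1) := by rw [← div_pow, hy_def]; congr 1; field_simp; ring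
    _ ≤ (m : ℝ) ^ (2 ^ n - 1) := by gcongr
    _ ≤ coverNum (iterSumset reciprocals n) r := by
        exact_mod_cast pow_le_coverNum_iterSumset hn hm hr hrm

/-- For `F = {1/k : k ≥ 1}`, the lower box dimension of the `n`-fold iterated sumset
`nF` is at least `1 - 2⁻ⁿ`. -/
theorem stmt1 (n : ℕ) (hn : 1 ≤ n) :
    1 - (2 : ℝ) ^ (-(n : ℝ)) ≤
      lowerBoxDim (iterSumset {x : ℝ | ∃ k : ℕ, 1 ≤ k ∧ x = 1 / k} n) := by
  have hE : IsBounded (iterSumset reciprocals n) := isBounded_iterSumset isBounded_reciprocals n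
  rw [rpow_neg zero_le_two, rpow_natCast]
  calc 1 - ((2 : ℝ) ^ n)⁻¹ ≤ lowerBoxDimBdd (iterSumset reciprocals n) :=
        le_lowerBoxDimBdd_of_eventually_le_coverNum hE (by positivity)
          (eventually_le_coverNum_iterSumset hn)
    _ ≤ lowerBoxDim (iterSumset reciprocals n) := lowerBoxDimBdd_le_lowerBoxDim hE
end

section
/- For every n ≥ 1, the set {1/k : k ∈ ℕ, k ≥ 1} + {1/k : k ∈ ℕ, k ≥ 1} + ⋯ (iterated n times) is δ-dense in [0, δ^{2^{-n}}] for every δ ∈ (0,1). -/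
open Set Metric Filter Pointwise

/-!
Induction on `n`. Given `0 < y ≤ δ ^ 2^(-(n+1))`, subtract the largest unit fraction
`1/k ≤ y` (`k = ⌈1/y⌉`): the remainder lies in `[0, y²]`, and `y² ≤ δ ^ 2^(-n)`, so the
remainder is `δ`-close to the `n`-fold sumset. The point `y = 0` is approximated by `n/k`
for `k` large.
-/

def unitFractions : Set ℝ := {x | ∃ k : ℕ, 1 ≤ k ∧ x = 1 / k}

lemma one_div_mem_unitFractions {k : ℕ} (hk : 1 ≤ k) : 1 / (k : ℝ) ∈ unitFractions :=
  ⟨k, hk, rfl⟩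

lemma nsmul_mem_iterSumset {M : Type*} [AddMonoid M] {F : Set M} {a : M} (ha : a ∈ F)
    (m : ℕ) : m • a ∈ iterSumset F m := by
  induction m with
  | zero => simp [iterSumset]
  | succ m ih => rw [succ_nsmul]; exact add_mem_add ih ha

lemma exists_mem_iterSumset_unitFractions_le (n : ℕ) {ε : ℝ} (hε : 0 < ε) :
    ∃ x ∈ iterSumset unitFractions n, 0 ≤ x ∧ x ≤ ε := by
  obtain ⟨k, hk⟩ := exists_nat_gt ((n : ℝ) / ε)
  have hk0 : (0 : ℝ) < k := (div_nonneg n.cast_nonneg hε.le).trans_lt hk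
  refine ⟨n • (1 / (k : ℝ)), nsmul_mem_iterSumset
    (one_div_mem_unitFractions (by exact_mod_cast hk0)) n,
    by positivity, ?_⟩
  rw [nsmul_eq_mul, mul_one_div, div_le_iff₀ hk0]
  rw [div_lt_iff₀ hε] at hk
  linarith

lemma exists_one_div_le_sub_le_sq {y : ℝ} (hy : 0 < y) :
    ∃ k : ℕ, 1 ≤ k ∧ 1 / (k : ℝ) ≤ y ∧ y - 1 / k ≤ y ^ 2 := by
  have hy' : 0 < 1 / y := by positivity
  set k := ⌈1 / y⌉₊
  have hk_ge : 1 / y ≤ k := Nat.le_ceil _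
  have hk_lt : (k : ℝ) < 1 / y + 1 := Nat.ceil_lt_add_one hy'.le
  have hk0 : (0 : ℝ) < k := hy'.trans_le hk_ge
  have hyk : 1 ≤ y * k := by rwa [div_le_iff₀ hy, mul_comm] at hk_ge
  have hyk' : y * k < 1 + y := by
    have := mul_lt_mul_of_pos_left hk_lt hy
    rwa [mul_add, mul_one_div_cancel hy.ne', mul_one] at this
  refine ⟨k, Nat.ceil_pos.mpr hy', by rwa [div_le_iff₀ hk0], ?_⟩
  rw [sub_le_iff_le_add, add_div' _ _ _ hk0.ne', le_div_iff₀ hk0]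
  nlinarith

lemma rpow_two_rpow_neg_add_one_sq {δ : ℝ} (hδ : 0 ≤ δ) (t : ℝ) :
    (δ ^ (2 : ℝ) ^ (-(t + 1))) ^ 2 = δ ^ (2 : ℝ) ^ (-t) := by
  rw [← Real.rpow_natCast, ← Real.rpow_mul hδ, Nat.cast_ofNat,
    ← Real.rpow_add_one two_ne_zero, neg_add, neg_add_cancel_right]

theorem stmt3_general (n : ℕ) (δ : ℝ) (hδ : δ ∈ Set.Ioo (0 : ℝ) 1) :
    ∀ y ∈ Set.Icc (0 : ℝ) (δ ^ ((2 : ℝ) ^ (-(n : ℝ)))),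
      ∃ x ∈ iterSumset {x : ℝ | ∃ k : ℕ, 1 ≤ k ∧ x = 1 / k} n, |y - x| ≤ δ := by
  induction n with
  | zero =>
    rintro y ⟨hy0, hyδ⟩
    refine ⟨0, rfl, ?_⟩
    simpa [abs_of_nonneg hy0] using hyδ
  | succ n ih =>
    rintro y ⟨hy0, hyδ⟩
    rcases hy0.eq_or_lt with rfl | hy0
    · obtain ⟨x, hx, hx0, hxδ⟩ := exists_mem_iterSumset_unitFractions_le (n + 1) hδ.1
      exact ⟨x, hx, by rwa [zero_sub, abs_neg, abs_of_nonneg hx0]⟩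
    · have hy_sq : y ^ 2 ≤ δ ^ (2 : ℝ) ^ (-(n : ℝ)) := by
        rw [← rpow_two_rpow_neg_add_one_sq hδ.1.le]
        push_cast at hyδ
        exact pow_le_pow_left₀ hy0.le hyδ 2
      obtain ⟨k, hk, hky, hrem⟩ := exists_one_div_le_sub_le_sq hy0
      obtain ⟨x, hx, hxy⟩ := ih (y - 1 / k) ⟨sub_nonneg.mpr hky, hrem.trans hy_sq⟩
      refine ⟨x + 1 / k, add_mem_add hx (one_div_mem_unitFractions hk), ?_⟩
      rwa [← sub_sub, sub_right_comm]

/-- For every `n ≥ 1` and every `δ ∈ (0,1)`, the `n`-fold iterated sumset of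
`{1/k : k ≥ 1}` is `δ`-dense in `[0, δ^(2⁻ⁿ)]`. -/
theorem stmt3 (n : ℕ) (hn : 1 ≤ n) (δ : ℝ) (hδ : δ ∈ Set.Ioo (0 : ℝ) 1) :
    ∀ y ∈ Set.Icc (0 : ℝ) (δ ^ ((2 : ℝ) ^ (-(n : ℝ)))),
      ∃ x ∈ iterSumset {x : ℝ | ∃ k : ℕ, 1 ≤ k ∧ x = 1 / k} n, |y - x| ≤ δ :=
  stmt3_general n δ hδ
end

section
/- Let r ∈ (0, 1/2) and let Φ be the iterated function system on [0,1] consisting of φ₁(x) = rx and φ₂(x) = rx + (1-r), with attractor X. Then for any integer k ≥ (1-r)/r, the k-fold iterated sumset kX equals the interval [0,k]. -/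
open Set Metric Filter Pointwise

/-!
The sumset `Y = kX` is compact, lies in `[0, k]`, and is invariant under the `k + 1` contractions
`x ↦ r x + i (1 - r)`, `i ≤ k`: a sum of `k` points of `X`, each replaced by its image under `φ₁`
or `φ₂`, is mapped to such a point with `i` the number of `φ₂`'s. When `k r ≥ 1 - r` the images of
`[0, k]` under these contractions overlap enough to cover `[0, k]`. Iterating, every point of
`[0, k]` is within `rⁿ k` of `Y` for all `n`, so it lies in the closed set `Y`.
-/

theorem subset_of_subset_iUnion_image_of_mapsTo {α ι : Type*} [PseudoMetricSpace α]
    {f : ι → α → α} {K : NNReal} (hK : K < 1) (hf : ∀ i, LipschitzWith K (f i)) {S Y : Set α}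
    (hY : IsClosed Y) (hfY : ∀ i, MapsTo (f i) Y Y) (hS : S ⊆ ⋃ i, f i '' S) (D : ℝ)
    (hD : ∀ x ∈ S, ∃ y ∈ Y, dist x y ≤ D) : S ⊆ Y := by
  have approx : ∀ n : ℕ, ∀ x ∈ S, ∃ y ∈ Y, dist x y ≤ K ^ n * D := by
    intro n
    induction n with
    | zero => simpa using hD
    | succ n ih =>
      intro x hx
      obtain ⟨i, x', hx', rfl⟩ := mem_iUnion.mp (hS hx)
      obtain ⟨y, hy, hdist⟩ := ih x' hx'
      refine ⟨f i y, hfY i hy, ?_⟩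
      calc dist (f i x') (f i y) ≤ K * dist x' y := (hf i).dist_le_mul x' y
        _ ≤ K * (K ^ n * D) := by gcongr
        _ = K ^ (n + 1) * D := by ring
  have hlim : Tendsto (fun n : ℕ => (K : ℝ) ^ n * D) atTop (nhds 0) := by
    simpa using (tendsto_pow_atTop_nhds_zero_of_lt_one K.2 hK).mul_const D
  intro x hx
  rw [← hY.closure_eq, Metric.mem_closure_iff]
  intro ε hε
  obtain ⟨n, hn⟩ := (hlim.eventually (gt_mem_nhds hε)).exists
  obtain ⟨y, hy, hdist⟩ := approx n x hx
  exact ⟨y, hy, hdist.trans_lt hn⟩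

theorem iterSumset_subset_Icc {X : Set ℝ} {a b : ℝ} (hX : X ⊆ Icc a b) (n : ℕ) :
    iterSumset X n ⊆ Icc (n * a) (n * b) := by
  induction n with
  | zero => simp [iterSumset]
  | succ n ih =>
    calc iterSumset X (n + 1) ⊆ Icc (n * a) (n * b) + Icc a b := add_subset_add ih hX
      _ ⊆ Icc (n * a + a) (n * b + b) := Icc_add_Icc_subset _ _ _ _
      _ = Icc ((n + 1 : ℕ) * a) ((n + 1 : ℕ) * b) := by push_cast; ring_nf

theorem IsCompact.iterSumset {M : Type*} [AddMonoid M] [TopologicalSpace M] [ContinuousAdd M]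
    {X : Set M} (hX : IsCompact X) (n : ℕ) : IsCompact (iterSumset X n) := by
  induction n with
  | zero => exact isCompact_singleton
  | succ n ih => exact ih.add hX

theorem Set.Nonempty.iterSumset {M : Type*} [AddMonoid M] {X : Set M} (hX : X.Nonempty)
    (n : ℕ) : (iterSumset X n).Nonempty := by
  induction n with
  | zero => exact singleton_nonempty 0
  | succ n ih => exact ih.add hX

theorem mul_add_natCast_mul_mem_iterSumset {R : Type*} [CommSemiring R] {X : Set R} {r c : R}
    (h₁ : MapsTo (r * ·) X X) (h₂ : MapsTo (fun x => r * x + c) X X) {n i : ℕ} (hi : i ≤ n)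
    {x : R} (hx : x ∈ iterSumset X n) : r * x + i * c ∈ iterSumset X n := by
  induction n generalizing i x with
  | zero =>
    obtain rfl : i = 0 := Nat.le_zero.mp hi
    simp_all [iterSumset]
  | succ n ih =>
    obtain ⟨y, hy, z, hz, rfl⟩ := hx
    rcases Nat.lt_or_ge i (n + 1) with hin | hin
    · exact ⟨r * y + i * c, ih (Nat.lt_succ_iff.mp hin) hy, r * z, h₁ hz, by ring⟩
    · obtain rfl : i = n + 1 := le_antisymm hi hin
      exact ⟨r * y + n * c, ih le_rfl hy, r * z + c, h₂ hz, by push_cast; ring⟩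

theorem subset_Icc_zero_one_of_subset_union_image {r : ℝ} (hr₀ : 0 ≤ r) (hr₁ : r < 1)
    {X : Set ℝ} (hX : IsCompact X) (hne : X.Nonempty)
    (hinv : X ⊆ (fun x => r * x) '' X ∪ (fun x => r * x + (1 - r)) '' X) : X ⊆ Icc 0 1 := by
  have hsup : sSup X ≤ 1 := by
    have hle : ∀ x ∈ X, x ≤ sSup X := fun x hx => le_csSup hX.bddAbove hx
    rcases hinv (hX.sSup_mem hne) with ⟨x, hx, hxe⟩ | ⟨x, hx, hxe⟩ <;>
      nlinarith [hle x hx]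
  have hinf : 0 ≤ sInf X := by
    have hge : ∀ x ∈ X, sInf X ≤ x := fun x hx => csInf_le hX.bddBelow hx
    rcases hinv (hX.sInf_mem hne) with ⟨x, hx, hxe⟩ | ⟨x, hx, hxe⟩ <;>
      nlinarith [hge x hx]
  exact fun x hx => ⟨hinf.trans (csInf_le hX.bddBelow hx), (le_csSup hX.bddAbove hx).trans hsup⟩

theorem Icc_subset_iUnion_image_mul_add {r : ℝ} (hr₀ : 0 < r) (hr₁ : r < 1) {k : ℕ}
    (hk : 1 - r ≤ r * k) :
    Icc 0 (k : ℝ) ⊆ ⋃ i : Fin (k + 1), (fun x => r * x + (i : ℕ) * (1 - r)) '' Icc 0 (k : ℝ) := by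
  intro t ⟨ht₀, htk⟩
  have hc : 0 < 1 - r := sub_pos.mpr hr₁
  set i := min k ⌊t / (1 - r)⌋₊ with hi
  have hlo : (i : ℝ) * (1 - r) ≤ t := by
    rw [← le_div_iff₀ hc]
    exact (Nat.cast_le.mpr (min_le_right _ _)).trans (Nat.floor_le (div_nonneg ht₀ hc.le))
  have hhi : t - i * (1 - r) ≤ r * k := by
    rcases le_total k ⌊t / (1 - r)⌋₊ with hfl | hfl
    · rw [hi, min_eq_left hfl]
      linarith
    · have hlt : t < (i + 1) * (1 - r) := by
        rw [hi, min_eq_right hfl, ← div_lt_iff₀ hc]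
        exact Nat.lt_floor_add_one _
      linarith
  refine mem_iUnion.mpr ⟨⟨i, Nat.lt_succ_of_le (min_le_left _ _)⟩, (t - i * (1 - r)) / r,
    ⟨div_nonneg (by linarith) hr₀.le, (div_le_iff₀ hr₀).mpr (by linarith)⟩, ?_⟩
  field_simp
  ring

/-- Let `X` be the attractor of the IFS `{x ↦ rx, x ↦ rx + (1-r)}` with `r ∈ (0,1/2)`.
For any integer `k ≥ (1-r)/r`, the `k`-fold iterated sumset `kX` equals `[0,k]`. -/
theorem stmt4 (r : ℝ) (hr : r ∈ Set.Ioo (0 : ℝ) (1 / 2)) (X : Set ℝ)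
    (hX : IsCompact X) (hne : X.Nonempty)
    (hinv : X = (fun x => r * x) '' X ∪ (fun x => r * x + (1 - r)) '' X)
    (k : ℕ) (hk : (1 - r) / r ≤ (k : ℝ)) :
    iterSumset X k = Set.Icc 0 (k : ℝ) := by
  obtain ⟨hr₀, hr₁⟩ := hr
  have hX01 : X ⊆ Icc 0 1 :=
    subset_Icc_zero_one_of_subset_union_image hr₀.le (by linarith) hX hne hinv.le
  have hsub : iterSumset X k ⊆ Icc 0 (k : ℝ) := by
    simpa using iterSumset_subset_Icc hX01 k
  refine hsub.antisymm (subset_of_subset_iUnion_image_of_mapsTo (K := r.toNNReal)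
    (f := fun (i : Fin (k + 1)) x => r * x + (i : ℕ) * (1 - r)) ?_ ?_ (hX.iterSumset k).isClosed
    ?_ (Icc_subset_iUnion_image_mul_add hr₀ (by linarith) ?_) k ?_)
  · exact Real.toNNReal_lt_one.mpr (by linarith)
  · refine fun i => LipschitzWith.of_dist_le_mul fun x y => ?_
    simp [Real.dist_eq, abs_mul, abs_of_pos hr₀, ← mul_sub, Real.coe_toNNReal r hr₀.le]
  · exact fun i x hx => mul_add_natCast_mul_mem_iterSumset (fun x hx => hinv.ge (Or.inl ⟨x, hx, rfl⟩))
      (fun x hx => hinv.ge (Or.inr ⟨x, hx, rfl⟩)) (Nat.lt_succ_iff.mp i.2) hx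
  · rwa [div_le_iff₀ hr₀, mul_comm] at hk
  · obtain ⟨y, hy⟩ := hne.iterSumset k
    exact fun t ht => ⟨y, hy, by simpa using Real.dist_le_of_mem_Icc ht (hsub hy)⟩
end

section
/- Let F ⊆ ℝ be a self-similar set (attractor of a finite IFS of contracting similarities on ℝ) which is not a singleton. Then there exists n ≥ 1 such that the iterated sumset nF contains a nonempty open interval. -/
/-
Two maps `fᵢ`, `fⱼ` of the system have distinct fixed points, since otherwise `F` would be their
common fixed point. The squares of `fᵢ ∘ fⱼ` and `fⱼ ∘ fᵢ` then map `F` into itself with the same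
ratio `0 < l < 1` and distinct translations `B' < B`, so `nF` is mapped into itself by the
contractions `t ↦ l t + n B' + k (B - B')`, `0 ≤ k ≤ n`. Once `l (n + 1) ≥ 1` the images of a
suitable interval `I` under these maps cover `I`, and a compact set covered by its images under
contractions preserving a compact set `Y` lies in `Y` (consider its point farthest from `Y`).
Hence `I ⊆ nF`.
-/

open Set Metric Filter Pointwise

open scoped NNReal

theorem iterSumset_eq_nsmul {M : Type*} [AddMonoid M] (F : Set M) (n : ℕ) :
    iterSumset F n = n • F := by
  induction n with
  | zero => rfl
  | succ n ih => rw [iterSumset, ih, succ_nsmul]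

theorem IsCompact.nsmul {M : Type*} [AddMonoid M] [TopologicalSpace M] [ContinuousAdd M]
    {s : Set M} (hs : IsCompact s) (n : ℕ) : IsCompact (n • s) := by
  induction n with
  | zero => rw [zero_nsmul, ← singleton_zero]; exact isCompact_singleton
  | succ n ih => rw [succ_nsmul]; exact ih.add hs

theorem Set.MapsTo.affine_nsmul {R : Type*} [Semiring R] {F S : Set R} {l : R}
    (h : ∀ β ∈ S, MapsTo (fun x => l * x + β) F F) (n : ℕ) :
    ∀ β ∈ n • S, MapsTo (fun x => l * x + β) (n • F) (n • F) := by
  induction n with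
  | zero =>
    simp only [zero_nsmul, Set.mem_zero]
    rintro β rfl x rfl
    simp
  | succ n ih =>
    simp only [succ_nsmul]
    rintro _ ⟨β, hβ, γ, hγ, rfl⟩ _ ⟨y, hy, x, hx, rfl⟩
    show l * (y + x) + (β + γ) ∈ n • F + F
    rw [mul_add, add_add_add_comm]
    exact add_mem_add (ih β hβ hy) (h γ hγ hx)

lemma nsmul_add_nsmul_mem_nsmul_pair {M : Type*} [AddMonoid M] (x y : M) {k n : ℕ}
    (hk : k ≤ n) : k • x + (n - k) • y ∈ n • ({x, y} : Set M) := by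
  rw [← Nat.add_sub_cancel' hk, add_nsmul, Nat.add_sub_cancel_left]
  exact add_mem_add (nsmul_mem_nsmul (mem_insert x _)) (nsmul_mem_nsmul (mem_insert_of_mem x rfl))

theorem IsCompact.subset_of_subset_iUnion_image_of_mapsTo {X ι : Type*} [MetricSpace X]
    {K Y : Set X} {g : ι → X → X} {l : ι → ℝ≥0} (hK : IsCompact K) (hY : IsCompact Y)
    (hYne : Y.Nonempty) (hg : ∀ i, ContractingWith (l i) (g i))
    (hKY : K ⊆ ⋃ i, g i '' K) (hgY : ∀ i, MapsTo (g i) Y Y) : K ⊆ Y := by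
  rcases K.eq_empty_or_nonempty with rfl | hKne
  · exact empty_subset _
  obtain ⟨t₀, ht₀, hmax⟩ := hK.exists_isMaxOn hKne (continuous_infDist_pt Y).continuousOn
  have hzero : infDist t₀ Y = 0 := by
    obtain ⟨i, s, hs, rfl⟩ := mem_iUnion.1 (hKY ht₀)
    obtain ⟨y, hy, hsy⟩ := hY.exists_infDist_eq_dist hYne s
    have : infDist (g i s) Y ≤ l i * infDist (g i s) Y := calc
      infDist (g i s) Y ≤ dist (g i s) (g i y) := infDist_le_dist_of_mem (hgY i hy)
      _ ≤ l i * dist s y := (hg i).2.dist_le_mul s y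
      _ = l i * infDist s Y := by rw [hsy]
      _ ≤ l i * infDist (g i s) Y := by gcongr; exact hmax hs
    have hl : (l i : ℝ) < 1 := (hg i).1
    nlinarith [infDist_nonneg (x := g i s) (s := Y)]
  intro t ht
  rw [hY.isClosed.mem_iff_infDist_zero hYne]
  exact le_antisymm (hzero ▸ hmax ht) infDist_nonneg

lemma contractingWith_affine {a : ℝ} (b : ℝ) (ha : |a| < 1) :
    ContractingWith ‖a‖₊ (fun x => a * x + b) :=
  ⟨by rwa [← NNReal.coe_lt_coe, coe_nnnorm, Real.norm_eq_abs],
    LipschitzWith.of_dist_le_mul fun x y => by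
      simp [Real.dist_eq, ← mul_sub, abs_mul]⟩

lemma affine_apply_div_one_sub {K : Type*} [Field K] {a : K} (b : K) (ha : a ≠ 1) :
    a * (b / (1 - a)) + b = b / (1 - a) := by
  field_simp [sub_ne_zero.2 ha.symm]
  ring

lemma Icc_subset_iUnion_image_affine {l c d p L : ℝ} {n : ℕ} (hl : 0 < l) (hd : 0 < d)
    (hp : l * p + c = p) (hdL : d ≤ l * L) (hLn : L ≤ l * L + n * d) :
    Icc p (p + L) ⊆ ⋃ k : Fin (n + 1), (fun t => l * t + (c + k * d)) '' Icc p (p + L) := by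
  rintro t ⟨htp, htL⟩
  set k := min n ⌊(t - p) / d⌋₊ with hk
  have hfloor : (⌊(t - p) / d⌋₊ : ℝ) * d ≤ t - p :=
    (le_div_iff₀ hd).1 (Nat.floor_le (div_nonneg (by linarith) hd.le))
  have hkd : (k : ℝ) * d ≤ t - p :=
    le_trans (by gcongr; exact min_le_right _ _) hfloor
  have hkL : t - p - k * d ≤ l * L := by
    rcases min_choice n ⌊(t - p) / d⌋₊ with h | h <;> rw [← hk] at h <;> rw [h]
    · linarith
    · have := (div_lt_iff₀ hd).1 (Nat.lt_floor_add_one ((t - p) / d))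
      linarith
  refine mem_iUnion.2
    ⟨⟨k, Nat.lt_succ_of_le (min_le_left _ _)⟩, (t - c - k * d) / l, ⟨?_, ?_⟩, ?_⟩
  · rw [le_div_iff₀ hl]; linarith
  · rw [div_le_iff₀ hl]; linarith
  · field_simp
    ring

theorem Icc_subset_of_mapsTo_affine {Y : Set ℝ} {l c d : ℝ} {n : ℕ} (hY : IsCompact Y)
    (hYne : Y.Nonempty) (hl0 : 0 < l) (hl1 : l < 1) (hd : 0 < d) (hn : 1 ≤ l * (n + 1))
    (hmaps : ∀ k ≤ n, MapsTo (fun t => l * t + (c + k * d)) Y Y) :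
    Icc (c / (1 - l)) (c / (1 - l) + d / l) ⊆ Y := by
  have hL : d / l ≤ l * (d / l) + n * d := by
    rw [mul_div_cancel₀ _ hl0.ne', div_le_iff₀ hl0]
    nlinarith
  refine isCompact_Icc.subset_of_subset_iUnion_image_of_mapsTo hY hYne
    (fun k : Fin (n + 1) => contractingWith_affine _ (abs_lt.2 ⟨by linarith, hl1⟩))
    (Icc_subset_iUnion_image_affine hl0 hd (affine_apply_div_one_sub c hl1.ne)
      (mul_div_cancel₀ _ hl0.ne').ge hL)
    fun k => hmaps k (Nat.lt_succ_iff.1 k.2)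

lemma Set.MapsTo.affine_comp {R : Type*} [CommSemiring R] {F : Set R} {a b a' b' : R}
    (h : MapsTo (fun x => a * x + b) F F)
    (h' : MapsTo (fun x => a' * x + b') F F) :
    MapsTo (fun x => a * a' * x + (a * b' + b)) F F := fun x hx => by
  convert h (h' hx) using 1
  ring

theorem exists_mapsTo_affine_pos_of_fixedPoint_ne {F : Set ℝ} {a₁ b₁ a₂ b₂ : ℝ}
    (h₁ : MapsTo (fun x => a₁ * x + b₁) F F) (h₂ : MapsTo (fun x => a₂ * x + b₂) F F)
    (ha₁ : 0 < |a₁| ∧ |a₁| < 1) (ha₂ : 0 < |a₂| ∧ |a₂| < 1)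
    (hfix : b₁ / (1 - a₁) ≠ b₂ / (1 - a₂)) :
    ∃ l B B', 0 < l ∧ l < 1 ∧ B' < B ∧
      MapsTo (fun x => l * x + B) F F ∧ MapsTo (fun x => l * x + B') F F := by
  set α := a₁ * a₂
  have hα : |α| < 1 := by
    rw [abs_mul]
    exact mul_lt_one_of_nonneg_of_lt_one_left (abs_nonneg _) ha₁.2 ha₂.2.le
  have hα0 : 0 < |α| := by rw [abs_mul]; exact mul_pos ha₁.1 ha₂.1
  have hsq : ∀ {γ}, MapsTo (fun x => α * x + γ) F F →
      MapsTo (fun x => α ^ 2 * x + (1 + α) * γ) F F := fun h => by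
    convert h.affine_comp h using 3 <;> ring
  have hγ : a₁ * b₂ + b₁ ≠ a₂ * b₁ + b₂ := by
    have h1 : 1 - a₁ ≠ 0 := by linarith [(abs_lt.1 ha₁.2).2]
    have h2 : 1 - a₂ ≠ 0 := by linarith [(abs_lt.1 ha₂.2).2]
    rw [Ne, div_eq_div_iff h1 h2] at hfix
    contrapose! hfix
    linear_combination hfix
  have hβ : (1 + α) * (a₁ * b₂ + b₁) ≠ (1 + α) * (a₂ * b₁ + b₂) :=
    (mul_right_injective₀ (by linarith [(abs_lt.1 hα).1])).ne hγ
  have hg₁ := hsq (h₁.affine_comp h₂)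
  have hg₂ := hsq (by simpa only [α, mul_comm a₁ a₂] using h₂.affine_comp h₁)
  have hl0 : 0 < α ^ 2 := by rw [← sq_abs]; exact pow_pos hα0 2
  have hl1 : α ^ 2 < 1 := by rw [← sq_abs]; nlinarith
  rcases hβ.lt_or_gt with h | h
  exacts [⟨_, _, _, hl0, hl1, h, hg₂, hg₁⟩, ⟨_, _, _, hl0, hl1, h, hg₁, hg₂⟩]

theorem eq_singleton_of_forall_fixedPoint_eq {ι : Type*} {F : Set ℝ} {a b : ι → ℝ}
    (ha : ∀ i, |a i| < 1) (hF : IsCompact F) (hne : F.Nonempty)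
    (hcov : F ⊆ ⋃ i, (fun x => a i * x + b i) '' F) (i₀ : ι)
    (hfix : ∀ i, b i / (1 - a i) = b i₀ / (1 - a i₀)) : F = {b i₀ / (1 - a i₀)} := by
  refine hne.subset_singleton_iff.1 <| hF.subset_of_subset_iUnion_image_of_mapsTo
    isCompact_singleton (singleton_nonempty _) (fun i => contractingWith_affine (b i) (ha i))
    hcov ?_
  rintro i _ rfl
  rw [← hfix i, mem_singleton_iff]
  exact affine_apply_div_one_sub _ (abs_lt.1 (ha i)).2.ne

theorem exists_Icc_subset_nsmul_of_mapsTo_affine {F : Set ℝ} {l B B' : ℝ} (hF : IsCompact F)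
    (hne : F.Nonempty) (hl0 : 0 < l) (hl1 : l < 1) (hB'B : B' < B)
    (hB : MapsTo (fun x => l * x + B) F F) (hB' : MapsTo (fun x => l * x + B') F F) :
    ∃ n : ℕ, 1 ≤ n ∧ ∃ c d : ℝ, c < d ∧ Icc c d ⊆ n • F := by
  set n := ⌈1 / l⌉₊
  have hn : 1 ≤ l * (n + 1) := by
    have := (div_le_iff₀' hl0).1 (Nat.le_ceil (1 / l))
    nlinarith
  have hS : ∀ β ∈ ({B, B'} : Set ℝ), MapsTo (fun x => l * x + β) F F := by
    rintro β (rfl | rfl)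
    exacts [hB, hB']
  refine ⟨n, Nat.ceil_pos.2 (by positivity), n * B' / (1 - l), _,
    lt_add_of_pos_right _ (div_pos (sub_pos.2 hB'B) hl0), ?_⟩
  refine Icc_subset_of_mapsTo_affine (hF.nsmul n) ⟨n • hne.some, nsmul_mem_nsmul hne.some_mem⟩
    hl0 hl1 (sub_pos.2 hB'B) hn fun k hk => ?_
  convert MapsTo.affine_nsmul hS n _ (nsmul_add_nsmul_mem_nsmul_pair B B' hk) using 3
  rw [nsmul_eq_mul, nsmul_eq_mul, Nat.cast_sub hk]
  ring

theorem stmt5_general (F : Set ℝ) (ι : Type)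
    (a b : ι → ℝ) (ha : ∀ i, 0 < |a i| ∧ |a i| < 1)
    (hF : IsCompact F) (hne : F.Nonempty)
    (hinv : F = ⋃ i, (fun x => a i * x + b i) '' F)
    (hns : ¬ ∃ x : ℝ, F = {x}) :
    ∃ n : ℕ, 1 ≤ n ∧ ∃ c d : ℝ, c < d ∧ Set.Ioo c d ⊆ iterSumset F n := by
  have hmaps : ∀ i, MapsTo (fun x => a i * x + b i) F F := fun i x hx =>
    hinv.symm.subset (mem_iUnion.2 ⟨i, x, hx, rfl⟩)
  obtain ⟨i, j, hij⟩ : ∃ i j, b i / (1 - a i) ≠ b j / (1 - a j) := by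
    by_contra! hfix
    obtain ⟨i₀, -⟩ := mem_iUnion.1 (hinv.subset hne.some_mem)
    exact hns ⟨_, eq_singleton_of_forall_fixedPoint_eq (fun i => (ha i).2) hF hne hinv.subset i₀
      (hfix · i₀)⟩
  obtain ⟨l, B, B', hl0, hl1, hB'B, hB, hB'⟩ :=
    exists_mapsTo_affine_pos_of_fixedPoint_ne (hmaps i) (hmaps j) (ha i) (ha j) hij
  obtain ⟨n, hn, c, d, hcd, hIcc⟩ :=
    exists_Icc_subset_nsmul_of_mapsTo_affine hF hne hl0 hl1 hB'B hB hB'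
  exact ⟨n, hn, c, d, hcd, iterSumset_eq_nsmul F n ▸ Ioo_subset_Icc_self.trans hIcc⟩

/-- If `F ⊆ ℝ` is a self-similar set (attractor of a finite IFS of contracting
similarities on `ℝ`) which is not a singleton, then some iterated sumset `nF`
contains a nonempty open interval. -/
theorem stmt5 (F : Set ℝ) (ι : Type) [Fintype ι] [Nonempty ι]
    (a b : ι → ℝ) (ha : ∀ i, 0 < |a i| ∧ |a i| < 1)
    (hF : IsCompact F) (hne : F.Nonempty)
    (hinv : F = ⋃ i, (fun x => a i * x + b i) '' F)
    (hns : ¬ ∃ x : ℝ, F = {x}) :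
    ∃ n : ℕ, 1 ≤ n ∧ ∃ c d : ℝ, c < d ∧ Set.Ioo c d ⊆ iterSumset F n :=
  stmt5_general F ι a b ha hF hne hinv hns
end

section
/- Let F ⊆ [0,1] be compact with lower dimension s > 0. Then for every ε > 0 there exists a compact subset F′ ⊆ F with lower dimension at least s − ε such that F′ is a Moran construction with strong separation condition and uniform branching number (i.e., F′ is built by iteratively replacing each construction interval with k equally long disjoint subintervals of length l_n, pairwise separated by at least l_n, for a fixed branching number k). -/
open Set Metric Filter Pointwise

/-- `F` is a Moran construction with strong separation condition and uniform branching
number: starting from `[0,1]`, each generation-`n` interval is replaced by `k` disjoint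
subintervals of common length `l (n+1)`, with pairwise gaps at least `l (n+1)`
(equivalently, left endpoints at distance at least `2 · l (n+1)`), and `F` is the
intersection over all generations. -/
def IsMoran (F : Set ℝ) : Prop :=
  ∃ k : ℕ, 1 ≤ k ∧ ∃ (l : ℕ → ℝ) (a : List (Fin k) → ℝ),
    l 0 = 1 ∧ a [] = 0 ∧ (∀ n, 0 < l (n + 1)) ∧
    (∀ (w : List (Fin k)) (c : Fin k),
      Set.Icc (a (w ++ [c])) (a (w ++ [c]) + l (w.length + 1)) ⊆
        Set.Icc (a w) (a w + l w.length)) ∧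
    (∀ (w : List (Fin k)) (c c' : Fin k), c ≠ c' →
      2 * l (w.length + 1) ≤ |a (w ++ [c]) - a (w ++ [c'])|) ∧
    F = ⋂ n : ℕ, ⋃ w : {w : List (Fin k) // w.length = n},
          Set.Icc (a w.1) (a w.1 + l n)

/-!
Given `0 < u < dim_L F` (for the theorem, `u = max (s - ε) (s / 2)`), fix an exponent `t > u`
and a constant `C` for which `F` satisfies the lower-dimension estimate. At every point `x ∈ F`
and every scale `Λ ^ n`, the estimate at radius `d Λ ^ n` and resolution `3 Λ ^ (n + 1)` yields
about `C (d / 3Λ) ^ t` points of `F` near `x` that are `3 Λ ^ (n + 1)`-separated. As `u < t`,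
for small `Λ` this exceeds `Λ ^ (-u)`, so a fixed number `k ≥ Λ ^ (-u)` of them can be kept at
every step. Intervals of length `Λ ^ (n + 1)` around the chosen points (translated into `[0, 1]`)
are then nested and `2 Λ ^ (n + 1)`-apart, and their limit set is a Moran set inside the closed
set `F`. A Moran set with ratio `Λ` and branching number `k` satisfies the lower-dimension
estimate with exponent `log k / log (1 / Λ) ≥ u`.
-/

open Topology

section CoverNum

variable {X : Type*} [PseudoMetricSpace X] {E : Set X} {r : ℝ}

lemma coverNum_le_card (S : Finset X) (h : E ⊆ ⋃ x ∈ S, ball x r) : coverNum E r ≤ S.card :=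
  Nat.sInf_le ⟨S, rfl, h⟩

lemma TotallyBounded.exists_card_eq_coverNum (hE : TotallyBounded E) (hr : 0 < r) :
    ∃ S : Finset X, S.card = coverNum E r ∧ E ⊆ ⋃ x ∈ S, ball x r := by
  obtain ⟨t, -, ht, hcov⟩ := finite_approx_of_totallyBounded hE r hr
  have hne : {n : ℕ | ∃ S : Finset X, S.card = n ∧ E ⊆ ⋃ x ∈ S, ball x r}.Nonempty :=
    ⟨_, ht.toFinset, rfl, by simpa using hcov⟩
  exact Nat.sInf_mem hne

lemma TotallyBounded.card_le_coverNum_mul (hE : TotallyBounded E) (hr : 0 < r) {P : Finset X}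
    (hPE : ↑P ⊆ E) {M : ℝ} (hM : ∀ c, ((P.filter fun p => dist p c < r).card : ℝ) ≤ M) :
    (P.card : ℝ) ≤ coverNum E r * M := by
  classical
  obtain ⟨S, hS, hcov⟩ := hE.exists_card_eq_coverNum hr
  have hsub : P ⊆ S.biUnion fun c => P.filter fun p => dist p c < r := by
    intro p hp
    obtain ⟨c, hc, hpc⟩ := mem_iUnion₂.1 (hcov (hPE hp))
    exact Finset.mem_biUnion.2 ⟨c, hc, Finset.mem_filter.2 ⟨hp, hpc⟩⟩
  calc (P.card : ℝ) ≤ ∑ c ∈ S, ((P.filter fun p => dist p c < r).card : ℝ) := by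
        exact_mod_cast (Finset.card_le_card hsub).trans Finset.card_biUnion_le
    _ ≤ ∑ _c ∈ S, M := Finset.sum_le_sum fun c _ => hM c
    _ = coverNum E r * M := by simp [hS]

lemma card_filter_dist_lt_le_one {P : Finset X}
    (hP : (P : Set X).Pairwise fun p q => 2 * r ≤ dist p q) (c : X) :
    (P.filter fun p => dist p c < r).card ≤ 1 := by
  refine Finset.card_le_one.2 fun p hp q hq => ?_
  rw [Finset.mem_filter] at hp hq
  by_contra hpq
  have := hP hp.1 hq.1 hpq
  linarith [dist_triangle_right p q c]

lemma TotallyBounded.exists_separated_coverNum_le_card (hE : TotallyBounded E) (hr : 0 < r) :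
    ∃ P : Finset X, ↑P ⊆ E ∧ (P : Set X).Pairwise (fun p q => r ≤ dist p q) ∧
      coverNum E r ≤ P.card := by
  classical
  set A : Set ℕ := {n | ∃ P : Finset X, ↑P ⊆ E ∧
    (P : Set X).Pairwise (fun p q => r ≤ dist p q) ∧ P.card = n}
  have hA : BddAbove A := by
    refine ⟨coverNum E (r / 2), ?_⟩
    rintro _ ⟨P, hPE, hP, rfl⟩
    have h := hE.card_le_coverNum_mul (half_pos hr) hPE (M := 1) fun c => by
      exact_mod_cast card_filter_dist_lt_le_one (by simpa [mul_div_cancel₀] using hP) c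
    exact_mod_cast (mul_one (coverNum E (r / 2) : ℝ)) ▸ h
  obtain ⟨P, hPE, hP, hcard⟩ := Nat.sSup_mem (s := A) ⟨0, ∅, by simp⟩ hA
  refine ⟨P, hPE, hP, coverNum_le_card P fun e he => ?_⟩
  by_contra hcov
  have hfar : ∀ p ∈ P, r ≤ dist e p := fun p hp => by
    by_contra h
    exact hcov (mem_iUnion₂.2 ⟨p, hp, not_le.1 h⟩)
  have heP : e ∉ P := fun h => by simpa using (hfar e h).trans_lt' hr
  have hins : P.card + 1 ∈ A := by
    refine ⟨insert e P, ?_, ?_, Finset.card_insert_of_notMem heP⟩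
    · simpa [Set.insert_subset_iff] using ⟨he, hPE⟩
    · rw [Finset.coe_insert, Set.pairwise_insert_of_notMem (by exact_mod_cast heP)]
      exact ⟨hP, fun p hp => ⟨hfar p hp, dist_comm e p ▸ hfar p hp⟩⟩
  have := le_csSup hA hins
  omega

end CoverNum

lemma card_filter_dist_lt_le {P : Finset ℝ} {δ r : ℝ} (hδ : 0 < δ) (hr : 0 ≤ r)
    (hP : (P : Set ℝ).Pairwise fun p q => δ ≤ dist p q) (c : ℝ) :
    ((P.filter fun p => dist p c < r).card : ℝ) ≤ 2 * r / δ + 1 := by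
  set Q := P.filter fun p => dist p c < r
  -- points of `Q` in the same cell of the grid `c - r + δℤ` are closer than `δ`
  set φ : ℝ → ℤ := fun p => ⌊(p - (c - r)) / δ⌋
  have hinj : Set.InjOn φ Q := by
    intro p hp q hq hφ
    by_contra hpq
    have h1 : δ ≤ dist p q := hP (Finset.mem_filter.1 hp).1 (Finset.mem_filter.1 hq).1 hpq
    have h2 := Int.abs_sub_lt_one_of_floor_eq_floor hφ
    rw [← sub_div, sub_sub_sub_cancel_right, abs_div, abs_of_pos hδ, div_lt_one hδ] at h2
    rw [Real.dist_eq] at h1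
    linarith
  have himg : Q.image φ ⊆ Finset.Icc 0 ⌊2 * r / δ⌋ := by
    intro n hn
    obtain ⟨p, hp, rfl⟩ := Finset.mem_image.1 hn
    have hpc := (Finset.mem_filter.1 hp).2
    rw [Real.dist_eq, abs_lt] at hpc
    exact Finset.mem_Icc.2 ⟨Int.floor_nonneg.2 (div_nonneg (by linarith) hδ.le),
      Int.floor_mono (div_le_div_of_nonneg_right (by linarith) hδ.le)⟩
  have hfloor : (0 : ℤ) ≤ ⌊2 * r / δ⌋ := Int.floor_nonneg.2 (by positivity)
  calc (Q.card : ℝ) = (Q.image φ).card := by rw [Finset.card_image_of_injOn hinj]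
    _ ≤ (Finset.Icc 0 ⌊2 * r / δ⌋).card := by exact_mod_cast Finset.card_le_card himg
    _ = (⌊2 * r / δ⌋ : ℝ) + 1 := by
        have : ((⌊2 * r / δ⌋ + 1).toNat : ℤ) = ⌊2 * r / δ⌋ + 1 := Int.toNat_of_nonneg (by omega)
        rw [Int.card_Icc, sub_zero]
        exact_mod_cast this
    _ ≤ 2 * r / δ + 1 := by gcongr; exact Int.floor_le _

lemma TotallyBounded.card_le_coverNum_mul_of_pairwise {E : Set ℝ} (hE : TotallyBounded E)
    {P : Finset ℝ} (hPE : ↑P ⊆ E) {δ r : ℝ} (hδ : 0 < δ) (hr : 0 < r)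
    (hP : (P : Set ℝ).Pairwise fun p q => δ ≤ dist p q) :
    (P.card : ℝ) ≤ coverNum E r * (2 * r / δ + 1) :=
  hE.card_le_coverNum_mul hr hPE (card_filter_dist_lt_le hδ hr.le hP)

lemma coverNum_le_of_subset_ball {E : Set ℝ} {c R r : ℝ} (hE : E ⊆ ball c R) (hR : 0 ≤ R)
    (hr : 0 < r) : (coverNum E r : ℝ) ≤ 2 * R / r + 1 := by
  have hEtb : TotallyBounded E :=
    (isCompact_closedBall c R).totallyBounded.subset (hE.trans ball_subset_closedBall)
  obtain ⟨P, hPE, hP, hcard⟩ := hEtb.exists_separated_coverNum_le_card hr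
  have hPc : (P.filter fun p => dist p c < R) = P :=
    Finset.filter_true_of_mem fun p hp => hE (hPE hp)
  calc (coverNum E r : ℝ) ≤ P.card := by exact_mod_cast hcard
    _ ≤ 2 * R / r + 1 := hPc ▸ card_filter_dist_lt_le hr hR hP c

section LowerDim

variable {X : Type*} [PseudoMetricSpace X]

def LowerDimEstimate (F : Set X) (s C : ℝ) : Prop :=
  ∀ x ∈ F, ∀ R, 0 < R → R < diam F → ∀ r, 0 < r → r < R →
    C * (R / r) ^ s ≤ (coverNum (ball x R ∩ F) r : ℝ)

lemma lowerDim_def (F : Set X) :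
    lowerDim F = sSup {s | 0 ≤ s ∧ ∃ C > 0, LowerDimEstimate F s C} := rfl

lemma diam_pos_of_lowerDim_pos {F : Set X} (h : 0 < lowerDim F) : 0 < diam F := by
  by_contra hd
  have hall : ∀ s, 0 ≤ s → ∃ C > 0, LowerDimEstimate F s C := fun s _ =>
    ⟨1, one_pos, fun _ _ R hR hRd => absurd (hR.trans hRd) hd⟩
  have hunbdd : ¬ BddAbove {s | 0 ≤ s ∧ ∃ C > 0, LowerDimEstimate F s C} := fun ⟨b, hb⟩ => by
    have := hb ⟨by positivity, hall (max b 0 + 1) (by positivity)⟩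
    linarith [le_max_left b 0]
  rw [lowerDim_def, Real.sSup_of_not_bddAbove hunbdd] at h
  exact h.false

lemma exists_lowerDimEstimate_of_lt_lowerDim {F : Set X} {u : ℝ} (hu : 0 ≤ u)
    (h : u < lowerDim F) : ∃ t, u < t ∧ ∃ C > 0, LowerDimEstimate F t C := by
  rw [lowerDim_def] at h
  have hne : {s | 0 ≤ s ∧ ∃ C > 0, LowerDimEstimate F s C}.Nonempty := by
    by_contra hne
    rw [Set.not_nonempty_iff_eq_empty] at hne
    rw [hne, Real.sSup_empty] at h
    linarith
  obtain ⟨t, ⟨-, hC⟩, hut⟩ := exists_lt_of_lt_csSup hne h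
  exact ⟨t, hut, hC⟩

lemma LowerDimEstimate.exists_separated_finset {F : Set X} {s C : ℝ} (h : LowerDimEstimate F s C)
    (hF : TotallyBounded F) {x : X} (hx : x ∈ F) {R ρ : ℝ} (hρ : 0 < ρ) (hρR : ρ < R)
    (hR : R < diam F) :
    ∃ P : Finset X, ↑P ⊆ ball x R ∩ F ∧ (P : Set X).Pairwise (fun p q => ρ ≤ dist p q) ∧
      C * (R / ρ) ^ s ≤ P.card := by
  obtain ⟨P, hPE, hP, hcard⟩ :=
    (hF.subset inter_subset_right).exists_separated_coverNum_le_card hρ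
  exact ⟨P, hPE, hP, (h x hx R (hρ.trans hρR) hR ρ hρ hρR).trans (by exact_mod_cast hcard)⟩

end LowerDim

lemma LowerDimEstimate.le_one {F : Set ℝ} {s C : ℝ} (h : LowerDimEstimate F s C) (hC : 0 < C)
    (hF : 0 < diam F) : s ≤ 1 := by
  by_contra! hs
  obtain ⟨x, hx⟩ : F.Nonempty := Set.nonempty_iff_ne_empty.2 fun hempty => by simp [hempty] at hF
  set R := diam F / 2
  have hR : 0 < R := by positivity
  obtain ⟨L, hLbig, hL1⟩ := (((tendsto_rpow_atTop (sub_pos.2 hs)).eventually_gt_atTop (3 / C)).and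
    (eventually_gt_atTop 1)).exists
  have hL0 : 0 < L := one_pos.trans hL1
  have hRL : R / (R / L) = L := by field_simp
  have h2RL : 2 * R / (R / L) = 2 * L := by field_simp
  have hbound := h x hx R hR (by simp only [R]; linarith) (R / L) (by positivity)
    (div_lt_self hR hL1)
  have hcover := coverNum_le_of_subset_ball (E := ball x R ∩ F) inter_subset_left hR.le
    (r := R / L) (by positivity)
  rw [hRL] at hbound
  rw [h2RL] at hcover
  have hLs : L ^ s = L ^ (s - 1) * L := by rw [Real.rpow_sub_one hL0.ne', div_mul_cancel₀ _ hL0.ne']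
  rw [div_lt_iff₀ hC] at hLbig
  nlinarith

lemma le_lowerDim {F : Set ℝ} (hF : 0 < diam F) {s C : ℝ} (hs : 0 ≤ s) (hC : 0 < C)
    (h : LowerDimEstimate F s C) : s ≤ lowerDim F :=
  le_csSup ⟨1, fun _ ⟨_, _, hC', h'⟩ => LowerDimEstimate.le_one h' hC' hF⟩ ⟨hs, C, hC, h⟩

lemma List.exists_append_cons_of_ne {α : Type*} :
    ∀ {u v : List α}, u.length = v.length → u ≠ v →
      ∃ w c c' u' v', c ≠ c' ∧ u = w ++ c :: u' ∧ v = w ++ c' :: v'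
  | [], [], _, huv => absurd rfl huv
  | c :: u, c' :: v, hlen, huv => by
    by_cases hc : c = c'
    · subst hc
      obtain ⟨w, d, d', u', v', hd, rfl, rfl⟩ :=
        List.exists_append_cons_of_ne (by simpa using hlen) fun h => huv (by rw [h])
      exact ⟨c :: w, d, d', u', v', hd, rfl, rfl⟩
    · exact ⟨[], c, c', u, v, hc, rfl, rfl⟩

lemma le_dist_of_mem_Icc_of_mem_Icc {a b l p q : ℝ} (hp : p ∈ Icc a (a + l))
    (hq : q ∈ Icc b (b + l)) (hab : 2 * l ≤ |a - b|) : l ≤ dist p q := by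
  rw [Real.dist_eq]
  obtain ⟨hp1, hp2⟩ := hp
  obtain ⟨hq1, hq2⟩ := hq
  cases abs_cases (a - b) <;> cases abs_cases (p - q) <;> linarith

lemma rpow_le_pow_of_le_one_div_pow {Λ u a : ℝ} {k j : ℕ} (hΛ : 0 < Λ) (hu : 0 ≤ u)
    (hku : (1 / Λ) ^ u ≤ k) (ha : 0 ≤ a) (haj : a ≤ (1 / Λ) ^ j) : a ^ u ≤ (k : ℝ) ^ j :=
  calc a ^ u ≤ ((1 / Λ) ^ j) ^ u := by gcongr
    _ = ((1 / Λ) ^ u) ^ j := by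
      rw [← Real.rpow_natCast_mul (by positivity), ← Real.rpow_mul_natCast (by positivity),
        mul_comm]
    _ ≤ (k : ℝ) ^ j := by gcongr

/-- The data of `IsMoran` with lengths `l n = Λ ^ n`: the interval of the word `w` is
`[left w, left w + Λ ^ |w|]`. -/
structure MoranIntervals (k : ℕ) (Λ : ℝ) where
  left : List (Fin k) → ℝ
  left_nil : left [] = 0
  nested : ∀ (w : List (Fin k)) (c : Fin k),
    Icc (left (w ++ [c])) (left (w ++ [c]) + Λ ^ (w.length + 1)) ⊆
      Icc (left w) (left w + Λ ^ w.length)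
  separated : ∀ (w : List (Fin k)) (c c' : Fin k), c ≠ c' →
    2 * Λ ^ (w.length + 1) ≤ |left (w ++ [c]) - left (w ++ [c'])|

namespace MoranIntervals

variable {k : ℕ} {Λ : ℝ} (M : MoranIntervals k Λ)

def interval (w : List (Fin k)) : Set ℝ := Icc (M.left w) (M.left w + Λ ^ w.length)

def limitSet : Set ℝ :=
  ⋂ n : ℕ, ⋃ w : {w : List (Fin k) // w.length = n}, Icc (M.left w.1) (M.left w.1 + Λ ^ n)

lemma isMoran_limitSet (hk : 1 ≤ k) (hΛ : 0 < Λ) : IsMoran M.limitSet :=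
  ⟨k, hk, fun n => Λ ^ n, M.left, pow_zero Λ, M.left_nil, fun _ => pow_pos hΛ _, M.nested,
    M.separated, rfl⟩

lemma interval_nil : M.interval [] = Icc 0 1 := by simp [interval, M.left_nil]

lemma interval_append_singleton_subset (w : List (Fin k)) (c : Fin k) :
    M.interval (w ++ [c]) ⊆ M.interval w := by
  simpa [interval] using M.nested w c

lemma interval_subset_of_isPrefix {w v : List (Fin k)} (h : w <+: v) :
    M.interval v ⊆ M.interval w := by
  obtain ⟨u, rfl⟩ := h
  induction u using List.reverseRecOn with
  | nil => simp
  | append_singleton u c ih =>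
    rw [← List.append_assoc]
    exact (M.interval_append_singleton_subset _ c).trans ih

lemma dist_le_of_mem_interval {w : List (Fin k)} {p q : ℝ} (hp : p ∈ M.interval w)
    (hq : q ∈ M.interval w) :
    dist p q ≤ Λ ^ w.length := by
  simpa using Real.dist_le_of_mem_Icc hp hq

lemma mem_limitSet_iff {z : ℝ} : z ∈ M.limitSet ↔ ∀ n, ∃ w, w.length = n ∧ z ∈ M.interval w := by
  simp only [limitSet, mem_iInter, mem_iUnion, Subtype.exists, interval]
  refine forall_congr' fun n => exists_congr fun w => ?_
  constructor <;> rintro ⟨rfl, hz⟩ <;> exact ⟨rfl, hz⟩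

lemma mem_limitSet_of_forall_exists {z : ℝ}
    (h : ∀ N, ∃ w : List (Fin k), N ≤ w.length ∧ z ∈ M.interval w) : z ∈ M.limitSet := by
  refine M.mem_limitSet_iff.2 fun n => ?_
  obtain ⟨w, hw, hz⟩ := h n
  exact ⟨w.take n, by simpa using hw, M.interval_subset_of_isPrefix (List.take_prefix n w) hz⟩

lemma limitSet_subset_Icc : M.limitSet ⊆ Icc 0 1 := fun z hz => by
  obtain ⟨w, hw, hz⟩ := M.mem_limitSet_iff.1 hz 0
  rwa [List.length_eq_zero_iff.1 hw, interval_nil] at hz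

lemma isCompact_limitSet : IsCompact M.limitSet := by
  refine isCompact_Icc.of_isClosed_subset (isClosed_iInter fun n => ?_) M.limitSet_subset_Icc
  have : Finite {w : List (Fin k) // w.length = n} := (List.finite_length_eq (Fin k) n).to_subtype
  exact isClosed_iUnion_of_finite fun _ => isClosed_Icc

lemma exists_mem_limitSet_mem_interval (hk : 0 < k) (hΛ : 0 < Λ) (w : List (Fin k)) :
    ∃ z ∈ M.limitSet, z ∈ M.interval w := by
  set t : ℕ → Set ℝ := fun m => M.interval (w ++ List.replicate m ⟨0, hk⟩)
  obtain ⟨z, hz⟩ := IsCompact.nonempty_iInter_of_sequence_nonempty_isCompact_isClosed t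
    (fun m => M.interval_subset_of_isPrefix ⟨[⟨0, hk⟩], by simp [List.replicate_succ']⟩)
    (fun m => ⟨_, left_mem_Icc.2 (le_add_of_nonneg_right (pow_pos hΛ _).le)⟩)
    isCompact_Icc (fun _ => isClosed_Icc)
  rw [mem_iInter] at hz
  refine ⟨z, M.mem_limitSet_of_forall_exists fun N => ⟨_, by simp, hz N⟩, by simpa [t] using hz 0⟩

lemma pow_le_dist_of_ne (hΛ0 : 0 ≤ Λ) (hΛ1 : Λ ≤ 1) {u v : List (Fin k)}
    (hlen : u.length = v.length) (huv : u ≠ v) {p q : ℝ} (hp : p ∈ M.interval u)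
    (hq : q ∈ M.interval v) :
    Λ ^ u.length ≤ dist p q := by
  obtain ⟨w, c, c', u', v', hc, rfl, rfl⟩ := List.exists_append_cons_of_ne hlen huv
  have hp' := M.interval_subset_of_isPrefix (w := w ++ [c]) ⟨u', by simp⟩ hp
  have hq' := M.interval_subset_of_isPrefix (w := w ++ [c']) ⟨v', by simp⟩ hq
  simp only [interval, List.length_append, List.length_singleton] at hp' hq'
  calc Λ ^ (w ++ c :: u').length ≤ Λ ^ (w.length + 1) :=
        pow_le_pow_of_le_one hΛ0 hΛ1 (by simp)
    _ ≤ dist p q := le_dist_of_mem_Icc_of_mem_Icc hp' hq' (M.separated w c c' hc)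

lemma limitSet_subset {F : Set ℝ} (hF : IsClosed F) (hΛ1 : Λ < 1)
    (hmeet : ∀ w, ∃ p ∈ F, p ∈ M.interval w) : M.limitSet ⊆ F := fun z hz => by
  refine hF.closure_subset (Metric.mem_closure_iff.2 fun ε hε => ?_)
  obtain ⟨n, hn⟩ := exists_pow_lt_of_lt_one hε hΛ1
  obtain ⟨w, rfl, hzw⟩ := M.mem_limitSet_iff.1 hz n
  obtain ⟨p, hpF, hpw⟩ := hmeet w
  exact ⟨p, hpF, (M.dist_le_of_mem_interval hzw hpw).trans_lt hn⟩

lemma diam_limitSet_pos (hk : 2 ≤ k) (hΛ0 : 0 < Λ) (hΛ1 : Λ ≤ 1) : 0 < diam M.limitSet := by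
  obtain ⟨p, hp, hpI⟩ := M.exists_mem_limitSet_mem_interval (by omega) hΛ0 [⟨0, by omega⟩]
  obtain ⟨q, hq, hqI⟩ := M.exists_mem_limitSet_mem_interval (by omega) hΛ0 [⟨1, by omega⟩]
  have hpq := M.pow_le_dist_of_ne hΛ0.le hΛ1 (by rfl) (fun h => by simp at h) hpI hqI
  have hbdd : Bornology.IsBounded M.limitSet := (isBounded_Icc 0 1).subset M.limitSet_subset_Icc
  exact (pow_pos hΛ0 _).trans_le (hpq.trans (dist_le_diam_of_mem hbdd hp hq))

lemma exists_separated_finset_subset_interval (hk : 0 < k) (hΛ0 : 0 < Λ) (hΛ1 : Λ ≤ 1)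
    (w : List (Fin k)) (j : ℕ) :
    ∃ P : Finset ℝ, P.card = k ^ j ∧ ↑P ⊆ M.limitSet ∩ M.interval w ∧
      (P : Set ℝ).Pairwise fun p q => Λ ^ (w.length + j) ≤ dist p q := by
  choose ζ hζF hζI using fun f : Fin j → Fin k =>
    M.exists_mem_limitSet_mem_interval hk hΛ0 (w ++ List.ofFn f)
  have hsep : ∀ f f', f ≠ f' → Λ ^ (w.length + j) ≤ dist (ζ f) (ζ f') := fun f f' hff' => by
    simpa using M.pow_le_dist_of_ne hΛ0.le hΛ1 (by simp)
      (fun h => hff' (List.ofFn_injective (List.append_cancel_left h))) (hζI f) (hζI f')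
  have hζinj : Function.Injective ζ := fun f f' h => by
    by_contra hff'
    have := hsep f f' hff'
    rw [h, dist_self] at this
    exact (pow_pos hΛ0 _).not_ge this
  refine ⟨Finset.univ.image ζ, by simp [Finset.card_image_of_injective _ hζinj], ?_, ?_⟩
  · rintro _ hp
    obtain ⟨f, -, rfl⟩ := Finset.mem_image.1 hp
    exact ⟨hζF f, M.interval_subset_of_isPrefix (List.prefix_append w _) (hζI f)⟩
  · rintro _ hp _ hq hpq
    obtain ⟨f, -, rfl⟩ := Finset.mem_image.1 hp
    obtain ⟨f', -, rfl⟩ := Finset.mem_image.1 hq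
    exact hsep f f' fun h => hpq (h ▸ rfl)

/-- The ball `B(x, R)` contains a whole interval of generation `n + 1`, where `Λ ^ (n + 1) ≈ R`,
hence `k ^ j` points of the limit set, one in each of its subintervals of generation
`m + 1 = n + 1 + j`, where `Λ ^ (m + 1) ≈ r`. These points are `Λ ^ (m + 1)`-separated, so an
`r`-ball holds at most `4 / Λ + 1` of them, while `k ^ j ≥ Λ ^ (-u j) ≥ (Λ R / r) ^ u`. -/
lemma lowerDimEstimate_limitSet (hΛ0 : 0 < Λ) (hΛ1 : Λ < 1) {u : ℝ} (hu : 0 ≤ u)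
    (hku : (1 / Λ) ^ u ≤ k) : LowerDimEstimate M.limitSet u (Λ ^ u / (4 / Λ + 1)) := by
  intro x hx R hR hRd r hr hrR
  have hR1 : R < 1 := by
    have := diam_mono M.limitSet_subset_Icc (isBounded_Icc (0 : ℝ) 1)
    rw [Real.diam_Icc zero_le_one, sub_zero] at this
    linarith
  obtain ⟨n, hnR, hRn⟩ := exists_nat_pow_near_of_lt_one (half_pos hR) (by linarith) hΛ0 hΛ1
  obtain ⟨m, hmr, hrm⟩ := exists_nat_pow_near_of_lt_one (half_pos hr) (by linarith) hΛ0 hΛ1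
  obtain ⟨j, hj⟩ : ∃ j, m = n + j := Nat.exists_eq_add_of_le <| by
    have : Λ ^ (m + 1) < Λ ^ n := by linarith
    have := (pow_lt_pow_iff_right_of_lt_one₀ hΛ0 hΛ1).1 this
    omega
  obtain ⟨w, hwlen, hxw⟩ := M.mem_limitSet_iff.1 hx (n + 1)
  have hk : 0 < k := by
    have : (1 : ℝ) ≤ (1 / Λ) ^ u := Real.one_le_rpow (one_le_one_div hΛ0 hΛ1.le) hu
    exact_mod_cast zero_lt_one.trans_le (this.trans hku)
  obtain ⟨P, hPcard, hPE, hPsep⟩ :=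
    M.exists_separated_finset_subset_interval hk hΛ0 hΛ1.le w j
  rw [hwlen, show n + 1 + j = m + 1 by omega] at hPsep
  have hPball : ↑P ⊆ ball x R ∩ M.limitSet := fun p hp => by
    have := M.dist_le_of_mem_interval (hPE hp).2 hxw
    rw [hwlen] at this
    exact ⟨mem_ball.2 (by linarith), (hPE hp).1⟩
  have hcount : (k : ℝ) ^ j ≤ coverNum (ball x R ∩ M.limitSet) r * (4 / Λ + 1) := by
    have htb : TotallyBounded (ball x R ∩ M.limitSet) :=
      (totallyBounded_Icc (0 : ℝ) 1).subset (inter_subset_right.trans M.limitSet_subset_Icc)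
    have hδ : 2 * r / Λ ^ (m + 1) ≤ 4 / Λ := by
      rw [div_le_div_iff₀ (pow_pos hΛ0 _) hΛ0, pow_succ]
      nlinarith [pow_pos hΛ0 m]
    calc (k : ℝ) ^ j = P.card := by rw [hPcard]; push_cast; rfl
      _ ≤ coverNum (ball x R ∩ M.limitSet) r * (2 * r / Λ ^ (m + 1) + 1) :=
        htb.card_le_coverNum_mul_of_pairwise hPball (pow_pos hΛ0 _) hr hPsep
      _ ≤ coverNum (ball x R ∩ M.limitSet) r * (4 / Λ + 1) := by gcongr
  have hscale : Λ * R / r ≤ (1 / Λ) ^ j := by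
    have hshift : (1 / Λ) ^ j * Λ ^ (m + 1) = Λ ^ (n + 1) := by
      rw [hj, add_right_comm, pow_add, one_div_pow]
      field_simp
    have hn1 : Λ * (R / 2) ≤ Λ ^ (n + 1) := by
      rw [pow_succ']
      exact mul_le_mul_of_nonneg_left hRn hΛ0.le
    have := mul_lt_mul_of_pos_left hmr (pow_pos (one_div_pos.2 hΛ0) j)
    rw [div_le_iff₀ hr]
    linarith
  have hgrowth := rpow_le_pow_of_le_one_div_pow hΛ0 hu hku (by positivity) hscale
  rw [mul_div_assoc, Real.mul_rpow hΛ0.le (by positivity)] at hgrowth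
  rw [div_mul_eq_mul_div, div_le_iff₀ (by positivity)]
  nlinarith [Real.rpow_nonneg (div_nonneg hR.le hr.le) u]

end MoranIntervals

/-- Left endpoint of the interval of length `l` centred at `y`, translated into `[0, 1]`. -/
noncomputable def clampLeft (l y : ℝ) : ℝ := max 0 (min (y - l / 2) (1 - l))

lemma Icc_clampLeft_subset {l y : ℝ} (hl : l ≤ 1) :
    Icc (clampLeft l y) (clampLeft l y + l) ⊆ Icc 0 1 := by
  refine Icc_subset_Icc (le_max_left _ _) ?_
  simp only [clampLeft, max_def, min_def]
  split_ifs <;> linarith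

lemma abs_clampLeft_sub_le {l y : ℝ} (hy : y ∈ Icc 0 1) (hl0 : 0 ≤ l) (hl : l ≤ 1) :
    |clampLeft l y - (y - l / 2)| ≤ l / 2 := by
  obtain ⟨hy0, hy1⟩ := hy
  simp only [clampLeft, max_def, min_def, abs_le]
  split_ifs <;> constructor <;> linarith

lemma mem_Icc_clampLeft {l y z : ℝ} (hz : z ∈ Icc 0 1) (hzy : |z - y| ≤ l / 2) :
    z ∈ Icc (clampLeft l y) (clampLeft l y + l) := by
  obtain ⟨hz0, hz1⟩ := hz
  rw [abs_le] at hzy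
  simp only [clampLeft, max_def, min_def, mem_Icc]
  split_ifs <;> constructor <;> linarith

section Construction

variable {k : ℕ} (Y : ℝ → ℕ → Fin k → ℝ) (x₀ : ℝ)

/-- Centres read along the reversed word: the centre of `c :: w` is the `c`-th point chosen by
`Y` around the centre of `w`. -/
def moranCentreRev : List (Fin k) → ℝ
  | [] => x₀
  | c :: w => Y (moranCentreRev w) w.length c

def moranCentre (w : List (Fin k)) : ℝ := moranCentreRev Y x₀ w.reverse

lemma moranCentre_append_singleton (w : List (Fin k)) (c : Fin k) :
    moranCentre Y x₀ (w ++ [c]) = Y (moranCentre Y x₀ w) w.length c := by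
  simp [moranCentre, moranCentreRev]

end Construction

/-- Each interval is centred, up to translation into `[0, 1]`, at a point of `F`, and the
centres of its children are the points chosen around that centre. -/
lemma exists_moranIntervals {F : Set ℝ} (hF : F ⊆ Icc 0 1) {x₀ : ℝ} (hx₀ : x₀ ∈ F) {k : ℕ}
    {Λ : ℝ} (hΛ0 : 0 < Λ) (hΛ : Λ ≤ 1 / 4)
    (hchildren : ∀ x ∈ F, ∀ n : ℕ, ∃ y : Fin k → ℝ, (∀ i, y i ∈ F ∧ |y i - x| ≤ Λ ^ n / 4) ∧
      ∀ i j, i ≠ j → 3 * Λ ^ (n + 1) ≤ |y i - y j|) :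
    ∃ M : MoranIntervals k Λ, ∀ w, ∃ p ∈ F, p ∈ M.interval w := by
  have hchildren' : ∀ x n, ∃ y : Fin k → ℝ, x ∈ F →
      (∀ i, y i ∈ F ∧ |y i - x| ≤ Λ ^ n / 4) ∧ ∀ i j, i ≠ j → 3 * Λ ^ (n + 1) ≤ |y i - y j| :=
    fun x n => by
      by_cases hx : x ∈ F
      · obtain ⟨y, hy⟩ := hchildren x hx n
        exact ⟨y, fun _ => hy⟩
      · exact ⟨0, fun h => absurd h hx⟩
  choose Y hY using hchildren'
  set ctr := moranCentre Y x₀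
  have hctr_append : ∀ w c, ctr (w ++ [c]) = Y (ctr w) w.length c :=
    moranCentre_append_singleton Y x₀
  have hctr : ∀ w, ctr w ∈ F := by
    intro w
    induction w using List.reverseRecOn with
    | nil => exact hx₀
    | append_singleton w c ih =>
      rw [hctr_append]
      exact ((hY _ _ ih).1 c).1
  have hpow : ∀ n, Λ ^ n ≤ 1 := fun n => pow_le_one₀ hΛ0.le (by linarith)
  refine ⟨⟨fun w => clampLeft (Λ ^ w.length) (ctr w), ?_, ?_, ?_⟩, fun w =>
    ⟨ctr w, hctr w, mem_Icc_clampLeft (hF (hctr w)) (by simp; positivity)⟩⟩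
  · simp [clampLeft]
  · intro w c z hz
    simp only [List.length_append, List.length_singleton, hctr_append] at hz ⊢
    obtain ⟨hyF, hyx⟩ := (hY _ w.length (hctr w)).1 c
    have hclamp := abs_clampLeft_sub_le (hF hyF) (pow_pos hΛ0 (w.length + 1)).le (hpow _)
    have hzy : |z - Y (ctr w) w.length c| ≤ Λ ^ (w.length + 1) := by
      rw [abs_le] at hclamp ⊢
      constructor <;> linarith [hz.1, hz.2]
    have hstep : Λ ^ (w.length + 1) ≤ Λ ^ w.length / 4 := by
      rw [pow_succ]
      nlinarith [pow_pos hΛ0 w.length]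
    refine mem_Icc_clampLeft (Icc_clampLeft_subset (hpow _) hz) ?_
    linarith [abs_sub_le z (Y (ctr w) w.length c) (ctr w)]
  · intro w c c' hcc
    simp only [List.length_append, List.length_singleton, hctr_append]
    have hsep := (hY _ w.length (hctr w)).2 c c' hcc
    have h := abs_clampLeft_sub_le (hF ((hY _ w.length (hctr w)).1 c).1)
      (pow_pos hΛ0 (w.length + 1)).le (hpow _)
    have h' := abs_clampLeft_sub_le (hF ((hY _ w.length (hctr w)).1 c').1)
      (pow_pos hΛ0 (w.length + 1)).le (hpow _)
    rw [abs_le] at h h'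
    set y := Y (ctr w) w.length c
    set y' := Y (ctr w) w.length c'
    cases abs_cases (y - y') <;>
      cases abs_cases (clampLeft (Λ ^ (w.length + 1)) y - clampLeft (Λ ^ (w.length + 1)) y') <;>
      linarith

lemma LowerDimEstimate.exists_separated_family {F : Set ℝ} {t C : ℝ} (h : LowerDimEstimate F t C)
    (hF : TotallyBounded F) {d Λ : ℝ} (hd : d ≤ 1 / 4) (hdF : d < diam F) (hΛ0 : 0 < Λ)
    (hΛd : Λ < d / 3) {k : ℕ} (hk : (k : ℝ) ≤ C * (d / 3 / Λ) ^ t) {x : ℝ} (hx : x ∈ F)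
    (n : ℕ) :
    ∃ y : Fin k → ℝ, (∀ i, y i ∈ F ∧ |y i - x| ≤ Λ ^ n / 4) ∧
      ∀ i j, i ≠ j → 3 * Λ ^ (n + 1) ≤ |y i - y j| := by
  have hΛn : 0 < Λ ^ n := pow_pos hΛ0 n
  have hΛn1 : Λ ^ n ≤ 1 := pow_le_one₀ hΛ0.le (by linarith)
  have hρR : 3 * Λ ^ (n + 1) < d * Λ ^ n := by rw [pow_succ]; nlinarith
  have hRF : d * Λ ^ n < diam F := by nlinarith
  obtain ⟨P, hPE, hPsep, hPcard⟩ := h.exists_separated_finset hF hx (by positivity) hρR hRF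
  have hratio : d * Λ ^ n / (3 * Λ ^ (n + 1)) = d / 3 / Λ := by
    rw [pow_succ]
    field_simp
  have hkP : k ≤ P.card := by exact_mod_cast hk.trans (hratio ▸ hPcard)
  set y : Fin k → ℝ := fun i => P.equivFin.symm (Fin.castLE hkP i)
  have hyP : ∀ i, y i ∈ P := fun i => (P.equivFin.symm _).2
  have hyinj : Function.Injective y := fun i j hij =>
    Fin.castLE_injective hkP (P.equivFin.symm.injective (Subtype.ext hij))
  refine ⟨y, fun i => ?_, fun i j hij => ?_⟩
  · obtain ⟨hyx, hyF⟩ := hPE (hyP i)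
    rw [mem_ball, Real.dist_eq] at hyx
    exact ⟨hyF, by nlinarith⟩
  · simpa [Real.dist_eq] using hPsep (hyP i) (hyP j) (hyinj.ne hij)

/-- `C (D / Λ) ^ t ≥ 2 Λ ^ (-u)` as soon as `Λ ^ (t - u) ≤ C D ^ t / 2`, and then its floor is
still at least `Λ ^ (-u)`. -/
lemma exists_ratio_and_branching_number {u t C D : ℝ} (hu : 0 ≤ u) (hut : u < t) (hC : 0 < C)
    (hD : 0 < D) :
    ∃ Λ : ℝ, 0 < Λ ∧ Λ < D ∧ Λ < 1 ∧ ∃ k : ℕ, (1 / Λ) ^ u ≤ k ∧ (k : ℝ) ≤ C * (D / Λ) ^ t := by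
  have hlim : Tendsto (fun Λ : ℝ => Λ ^ (t - u)) (𝓝[>] 0) (𝓝 0) := by
    have := (Real.continuousAt_rpow_const 0 (t - u) (Or.inr (sub_pos.2 hut).le)).tendsto
    rw [Real.zero_rpow (sub_pos.2 hut).ne'] at this
    exact this.mono_left nhdsWithin_le_nhds
  obtain ⟨Λ, hsmall, hΛ0, hΛD⟩ := ((hlim.eventually (gt_mem_nhds (by positivity :
    (0 : ℝ) < C * D ^ t / 2))).and (Ioo_mem_nhdsGT (lt_min hD one_pos))).exists
  have hΛ1 : Λ < 1 := hΛD.trans_le (min_le_right _ _)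
  refine ⟨Λ, hΛ0, hΛD.trans_le (min_le_left _ _), hΛ1, ⌊C * (D / Λ) ^ t⌋₊, ?_,
    Nat.floor_le (by positivity)⟩
  have ha : 1 ≤ (1 / Λ) ^ u := Real.one_le_rpow (one_le_one_div hΛ0 hΛ1.le) hu
  have hΛt : Λ ^ t = Λ ^ (t - u) * Λ ^ u := by rw [← Real.rpow_add hΛ0, sub_add_cancel]
  have hX : 2 * (1 / Λ) ^ u ≤ C * (D / Λ) ^ t := by
    rw [Real.div_rpow zero_le_one hΛ0.le, Real.one_rpow, Real.div_rpow hD.le hΛ0.le, hΛt]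
    have hΛu : 0 < Λ ^ u := Real.rpow_pos_of_pos hΛ0 u
    have hΛtu : 0 < Λ ^ (t - u) := Real.rpow_pos_of_pos hΛ0 _
    rw [mul_one_div, mul_div_assoc', div_le_div_iff₀ hΛu (by positivity)]
    nlinarith
  linarith [Nat.lt_floor_add_one (C * (D / Λ) ^ t)]

theorem exists_isMoran_subset_le_lowerDim {F : Set ℝ} (hFc : IsCompact F) (hF : F ⊆ Icc 0 1)
    {u : ℝ} (hu : 0 < u) (hlt : u < lowerDim F) :
    ∃ F' ⊆ F, IsCompact F' ∧ IsMoran F' ∧ u ≤ lowerDim F' := by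
  obtain ⟨t, hut, C, hC, hest⟩ := exists_lowerDimEstimate_of_lt_lowerDim hu.le hlt
  have hdiam : 0 < diam F := diam_pos_of_lowerDim_pos (hu.trans hlt)
  obtain ⟨x₀, hx₀⟩ : F.Nonempty := Set.nonempty_iff_ne_empty.2 fun h => by simp [h] at hdiam
  set d := min (1 / 4) (diam F / 2)
  have hd : 0 < d := lt_min (by norm_num) (half_pos hdiam)
  obtain ⟨Λ, hΛ0, hΛd, hΛ1, k, hku, hkC⟩ :=
    exists_ratio_and_branching_number hu.le hut hC (div_pos hd three_pos)
  have hk : 2 ≤ k := by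
    have : 1 < (1 / Λ) ^ u := Real.one_lt_rpow (one_lt_one_div hΛ0 hΛ1) hu
    have : (1 : ℝ) < k := this.trans_le hku
    exact_mod_cast this
  obtain ⟨M, hMF⟩ := exists_moranIntervals hF hx₀ hΛ0
    (by linarith [min_le_left (1 / 4 : ℝ) (diam F / 2)]) fun x hx n =>
    hest.exists_separated_family hFc.totallyBounded (min_le_left _ _)
      (by linarith [min_le_right (1 / 4 : ℝ) (diam F / 2)]) hΛ0 hΛd hkC hx n
  exact ⟨M.limitSet, M.limitSet_subset hFc.isClosed hΛ1 hMF, M.isCompact_limitSet,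
    M.isMoran_limitSet (by omega) hΛ0, le_lowerDim (M.diam_limitSet_pos hk hΛ0 hΛ1.le) hu.le
      (by positivity) (M.lowerDimEstimate_limitSet hΛ0 hΛ1 hu.le hku)⟩

/-- A compact set `F ⊆ [0,1]` with lower dimension `s > 0` contains, for every `ε > 0`,
a compact Moran-construction subset with strong separation and uniform branching number
whose lower dimension is at least `s - ε`. -/
theorem stmt16 (F : Set ℝ) (hFc : IsCompact F) (hF : F ⊆ Set.Icc 0 1)
    (s : ℝ) (hs : lowerDim F = s) (hspos : 0 < s) :
    ∀ ε > (0 : ℝ), ∃ F' : Set ℝ, F' ⊆ F ∧ IsCompact F' ∧ IsMoran F' ∧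
      s - ε ≤ lowerDim F' := by
  intro ε hε
  obtain ⟨F', hF'F, hF'c, hF'M, hF'dim⟩ := exists_isMoran_subset_le_lowerDim hFc hF
    (u := max (s - ε) (s / 2)) (lt_max_of_lt_right (half_pos hspos))
    (by rw [hs]; exact max_lt (by linarith) (half_lt_self hspos))
  exact ⟨F', hF'F, hF'c, hF'M, (le_max_left _ _).trans hF'dim⟩
end
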